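/- arXiv:1707.01420 — 12 statements merged into one kernel-verified Lean document; each statement's English description precedes it below -/
import Mathlib

section
/- There exists a dense G_δ subset A of ℝ² whose complement has Lebesgue measure zero, such that the arithmetic sum A + S¹ (where S¹ is the unit circle) has empty interior. -/
open Pointwise

open MeasureTheory

/-!
Removing from the plane the unit circles centred at the points of a countable dense set `D`
leaves a set `A` that is a countable intersection of open sets and is conull, as circles are
Lebesgue null. No point of `D` lies in `A + S¹`, since `d = a + s` would put `a` on the circle
of radius one around `d`; so `A + S¹` misses a dense set and has empty interior.
-/

open Metric Set

section

variable {E : Type*}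

theorem isGδ_compl_biUnion_sphere [PseudoMetricSpace E] {D : Set E} (hD : D.Countable) (r : ℝ) :
    IsGδ (⋃ d ∈ D, sphere d r)ᶜ := by
  rw [compl_iUnion₂]
  exact .biInter hD fun d _ => isClosed_sphere.isOpen_compl.isGδ

theorem disjoint_compl_biUnion_sphere_add_sphere [SeminormedAddCommGroup E] (D : Set E) (r : ℝ) :
    Disjoint ((⋃ d ∈ D, sphere d r)ᶜ + sphere 0 r) D := by
  rw [Set.disjoint_right]
  rintro d hd ⟨a, ha, s, hs, rfl⟩
  refine ha (mem_biUnion hd ?_)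
  rw [mem_sphere_iff_norm, sub_add_cancel_left, norm_neg]
  exact mem_sphere_zero_iff_norm.1 hs

theorem addHaar_biUnion_sphere [NormedAddCommGroup E] [NormedSpace ℝ E] [MeasurableSpace E]
    [BorelSpace E] [FiniteDimensional ℝ E] [Nontrivial E] (μ : Measure E) [μ.IsAddHaarMeasure]
    {D : Set E} (hD : D.Countable) (r : ℝ) : μ (⋃ d ∈ D, sphere d r) = 0 :=
  (measure_biUnion_null_iff hD).2 fun d _ => Measure.addHaar_sphere μ d r

theorem exists_dense_isGδ_conull_interior_add_sphere_eq_empty [NormedAddCommGroup E]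
    [NormedSpace ℝ E] [MeasurableSpace E] [BorelSpace E] [FiniteDimensional ℝ E] [Nontrivial E]
    (μ : Measure E) [μ.IsAddHaarMeasure] (r : ℝ) :
    ∃ A : Set E, Dense A ∧ IsGδ A ∧ μ Aᶜ = 0 ∧ interior (A + sphere 0 r) = ∅ := by
  obtain ⟨D, hDc, hDd⟩ := TopologicalSpace.exists_countable_dense E
  have hnull : μ (⋃ d ∈ D, sphere d r)ᶜᶜ = 0 := by
    rw [compl_compl]
    exact addHaar_biUnion_sphere μ hDc r
  refine ⟨_, Measure.dense_of_ae (μ := μ) (mem_ae_iff.2 hnull), isGδ_compl_biUnion_sphere hDc r,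
    hnull, ?_⟩
  rw [interior_eq_empty_iff_dense_compl]
  exact hDd.mono (disjoint_compl_biUnion_sphere_add_sphere D r).subset_compl_left

end

theorem stmt_0 :
    ∃ A : Set (EuclideanSpace ℝ (Fin 2)),
      Dense A ∧ IsGδ A ∧ volume Aᶜ = 0 ∧
      interior (A + Metric.sphere (0 : EuclideanSpace ℝ (Fin 2)) 1) = ∅ :=
  exists_dense_isGδ_conull_interior_add_sphere_eq_empty volume 1
end

section
/- The set A := (⋃_{v ∈ ℚ×ℚ} S(v,1))ᶜ, where S(v,1) = {x ∈ ℝ² : |x - v| = 1}, satisfies (A + S¹) ∩ (ℚ × ℚ) = ∅; consequently A + S¹ has empty interior. -/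
/-! If `a + s` were a rational point with `‖s‖ = 1`, then `a` would lie on the unit circle around
that rational point, which `A` avoids by construction. A set missing the dense set `ℚ × ℚ` has
empty interior. -/

open Pointwise Metric Set

theorem compl_iUnion_sphere_add_sphere_inter_eq_empty {E : Type*} [SeminormedAddCommGroup E]
    (D : Set E) (r : ℝ) : ((⋃ v ∈ D, sphere v r)ᶜ + sphere 0 r) ∩ D = ∅ := by
  refine eq_empty_of_forall_notMem ?_
  rintro _ ⟨⟨a, ha, s, hs, rfl⟩, hD⟩
  exact ha (mem_iUnion₂.2 ⟨a + s, hD, by simpa [dist_eq_norm] using hs⟩)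

theorem EuclideanSpace.dense_setOf_forall_mem_range_ratCast (ι : Type*) :
    Dense {p : EuclideanSpace ℝ ι | ∀ i, p i ∈ range ((↑) : ℚ → ℝ)} := by
  convert (dense_pi univ fun _ _ => Rat.denseRange_cast).preimage
    (PiLp.homeomorph 2 fun _ : ι => ℝ).isOpenMap
  ext p
  simp [PiLp.homeomorph]

theorem stmt_2
    (Q2 : Set (EuclideanSpace ℝ (Fin 2)))
    (hQ2 : Q2 = {p : EuclideanSpace ℝ (Fin 2) |
      (∃ q : ℚ, p 0 = (q : ℝ)) ∧ ∃ q : ℚ, p 1 = (q : ℝ)})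
    (A : Set (EuclideanSpace ℝ (Fin 2)))
    (hA : A = (⋃ v ∈ Q2, Metric.sphere v 1)ᶜ) :
    (A + Metric.sphere (0 : EuclideanSpace ℝ (Fin 2)) 1) ∩ Q2 = ∅ ∧
    interior (A + Metric.sphere (0 : EuclideanSpace ℝ (Fin 2)) 1) = ∅ := by
  have hQ2_dense : Dense Q2 := by
    convert EuclideanSpace.dense_setOf_forall_mem_range_ratCast (Fin 2) using 1
    ext p
    simp [hQ2, Fin.forall_fin_two, eq_comm]
  have hdisj := hA ▸ compl_iUnion_sphere_add_sphere_inter_eq_empty Q2 1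
  refine ⟨hdisj, interior_eq_empty_iff_dense_compl.2 (hQ2_dense.mono ?_)⟩
  exact subset_compl_iff_disjoint_left.2 (disjoint_iff_inter_eq_empty.2 hdisj)
end

section
/- There exists a compact set K ⊆ ℝ² with positive Lebesgue measure such that K + S¹ has empty interior. -/
/-!
Remove from the closed unit disc an open set of small area containing the unit circles centred
at the points of a countable dense set `S`; this is possible because those circles form a null
set. The remaining compact set `K` has positive area, and no point of `S` lies in `K + S¹`,
since `s = k + y` with `‖y‖ = 1` puts `k` on the circle of radius one about `s`.
-/

open Pointwise

open MeasureTheory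

open Metric Set

theorem MeasureTheory.exists_isCompact_pos_measure_disjoint_of_measure_eq_zero
    {X : Type*} [TopologicalSpace X] [MeasurableSpace X] (μ : Measure X) [μ.OuterRegular]
    {B N : Set X} (hB : IsCompact B) (hB_pos : 0 < μ B) (hN : μ N = 0) :
    ∃ K, IsCompact K ∧ 0 < μ K ∧ Disjoint K N := by
  obtain ⟨U, hNU, hU, hU_lt⟩ := N.exists_isOpen_lt_of_lt (μ B) (hN ▸ hB_pos)
  refine ⟨B \ U, hB.diff hU, pos_iff_ne_zero.2 fun hK => ?_, disjoint_sdiff_left.mono_right hNU⟩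
  have : μ B ≤ μ U := calc
    μ B ≤ μ (B ∩ U) + μ (B \ U) := measure_le_inter_add_sdiff μ B U
    _ = μ (B ∩ U) := by rw [hK, add_zero]
    _ ≤ μ U := measure_mono inter_subset_right
  exact this.not_gt hU_lt

theorem interior_add_sphere_eq_empty {E : Type*} [SeminormedAddCommGroup E] {K S : Set E}
    {r : ℝ} (hS : Dense S) (hK : Disjoint K (⋃ s ∈ S, sphere s r)) :
    interior (K + sphere 0 r) = ∅ := by
  refine interior_eq_empty_iff_dense_compl.2 (hS.mono ?_)
  rintro _ hs ⟨k, hk, y, hy, rfl⟩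
  have hk_sphere : k ∈ sphere (k + y) r := by
    rwa [mem_sphere, dist_self_add_right, ← mem_sphere_zero_iff_norm]
  exact hK.notMem_of_mem_left hk (mem_biUnion hs hk_sphere)

theorem MeasureTheory.Measure.exists_isCompact_pos_measure_interior_add_sphere_eq_empty
    {E : Type*} [NormedAddCommGroup E] [NormedSpace ℝ E] [FiniteDimensional ℝ E] [Nontrivial E]
    [MeasurableSpace E] [BorelSpace E] (μ : Measure E) [μ.IsAddHaarMeasure] (r : ℝ) :
    ∃ K, IsCompact K ∧ 0 < μ K ∧ interior (K + sphere 0 r) = ∅ := by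
  obtain ⟨S, hS_count, hS_dense⟩ := TopologicalSpace.exists_countable_dense E
  have h_null : μ (⋃ s ∈ S, sphere s r) = 0 :=
    (measure_biUnion_null_iff hS_count).2 fun s _ => μ.addHaar_sphere s r
  obtain ⟨K, hK, hK_pos, hK_disj⟩ := exists_isCompact_pos_measure_disjoint_of_measure_eq_zero μ
    (isCompact_closedBall (0 : E) 1) (measure_closedBall_pos μ 0 one_pos) h_null
  exact ⟨K, hK, hK_pos, interior_add_sphere_eq_empty hS_dense hK_disj⟩

theorem stmt_3 :
    ∃ K : Set (EuclideanSpace ℝ (Fin 2)),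
      IsCompact K ∧ 0 < volume K ∧
      interior (K + Metric.sphere (0 : EuclideanSpace ℝ (Fin 2)) 1) = ∅ :=
  volume.exists_isCompact_pos_measure_interior_add_sphere_eq_empty 1
end

section
/- Let A ⊆ ℝ² be a connected set with at least two points. Then A + S¹ has non-empty interior. In fact, the set Â := {x ∈ ℝ² : ∃ a₁, a₂ ∈ A with |x - a₁| < 1 and |x - a₂| > 1} is a non-empty open set contained in A + S¹. -/
open Pointwise

theorem stmt_5 (A : Set (EuclideanSpace ℝ (Fin 2)))
    (hconn : IsConnected A)
    (hcard : ∃ a₁ ∈ A, ∃ a₂ ∈ A, a₁ ≠ a₂) :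
    let Ahat := {x : EuclideanSpace ℝ (Fin 2) |
      ∃ a₁ ∈ A, ∃ a₂ ∈ A, dist x a₁ < 1 ∧ 1 < dist x a₂}
    Ahat.Nonempty ∧ IsOpen Ahat ∧
      Ahat ⊆ A + Metric.sphere (0 : EuclideanSpace ℝ (Fin 2)) 1 ∧
      (interior (A + Metric.sphere (0 : EuclideanSpace ℝ (Fin 2)) 1)).Nonempty := by
  intro Ahat
  have hne : Ahat.Nonempty := by
    obtain ⟨a₁, ha₁, a₂, ha₂, hneq⟩ := hcard
    set v := a₁ - a₂ with hv
    have hv0 : v ≠ 0 := sub_ne_zero.mpr hneq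
    set d := ‖v‖ with hd
    have hd0 : 0 < d := norm_pos_iff.mpr hv0
    set u : EuclideanSpace ℝ (Fin 2) := ‖v‖⁻¹ • v with hu
    have hu1 : ‖u‖ = 1 := norm_smul_inv_norm hv0
    set t : ℝ := 1 - min d 1 / 2 with ht
    have ht0 : 0 < t := by
      have : min d 1 ≤ 1 := min_le_right _ _
      simp only [ht]; linarith
    have ht1 : t < 1 := by
      have : 0 < min d 1 := lt_min hd0 one_pos
      simp only [ht]; linarith
    refine ⟨a₁ + t • u, a₁, ha₁, a₂, ha₂, ?_, ?_⟩
    · rw [dist_eq_norm, add_sub_cancel_left, norm_smul, hu1,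
        Real.norm_eq_abs, abs_of_pos ht0]
      simpa using ht1
    · have hvu : v = d • u := by
        rw [hu, smul_smul, hd, mul_inv_cancel₀ (ne_of_gt hd0), one_smul]
      have : a₁ + t • u - a₂ = (d + t) • u := by
        rw [add_smul, ← hvu]
        rw [hv]
        abel
      rw [dist_eq_norm, this, norm_smul, hu1, mul_one, Real.norm_eq_abs,
        abs_of_pos (by linarith)]
      have : min d 1 ≤ d := min_le_left _ _
      have : 0 < min d 1 := lt_min hd0 one_pos
      simp only [ht]
      linarith [min_le_left d 1]
  have hopen : IsOpen Ahat := by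
    rw [isOpen_iff_mem_nhds]
    rintro x ⟨a₁, ha₁, a₂, ha₂, h1, h2⟩
    have ho : IsOpen ({y : EuclideanSpace ℝ (Fin 2) | dist y a₁ < 1} ∩
        {y | 1 < dist y a₂}) :=
      (isOpen_lt (continuous_id.dist continuous_const) continuous_const).inter
        (isOpen_lt continuous_const (continuous_id.dist continuous_const))
    exact Filter.mem_of_superset (ho.mem_nhds ⟨h1, h2⟩)
      (fun y ⟨hy1, hy2⟩ => ⟨a₁, ha₁, a₂, ha₂, hy1, hy2⟩)
  have hsub : Ahat ⊆ A + Metric.sphere (0 : EuclideanSpace ℝ (Fin 2)) 1 := by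
    rintro x ⟨a₁, ha₁, a₂, ha₂, h1, h2⟩
    obtain ⟨a, ha, hax⟩ := hconn.isPreconnected.intermediate_value₂ ha₁ ha₂
      (Continuous.continuousOn (continuous_const.dist continuous_id))
      continuousOn_const h1.le h2.le
    refine Set.mem_add.mpr ⟨a, ha, x - a, ?_, by abel⟩
    simp [mem_sphere_iff_norm, ← dist_eq_norm, dist_comm]
    simpa using hax
  exact ⟨hne, hopen, hsub, hne.mono (interior_maximal hsub hopen)⟩
end

section
/- If A, B ⊆ ℝ are measurable sets of positive Lebesgue measure, then the sumset (A × B) + S¹ ⊆ ℝ² has non-empty interior. -/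
/-!
Near `(3/5, 4/5)` the unit circle is the graph of `g t = √(1 - t ^ 2)`, a Lipschitz involution of
`[3/5, 4/5]`; hence `g`-preimages have measure at most a constant times the original. Let `a`, `b`
be Lebesgue density points of `A`, `B` and `c` an interior point of `[3/5, 4/5]`. For `(u, v)`
within `h` of `(a + c, b + g c)`, the `t ∈ [c - h, c + h]` with `u - t ∉ A` or `v - g t ∉ B` come
from `closedBall a (C * h) \ A` and `closedBall b (C * h) \ B`, so for small `h` they have measure
`o(h)` and cannot fill `[c - h, c + h]`; any remaining `t` gives
`(u, v) = (u - t, v - g t) + (t, g t) ∈ A × B + S¹`.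
-/

open Pointwise

open MeasureTheory

open Set Filter Metric
open scoped NNReal ENNReal Topology

theorem exists_mem_tendsto_measure_compl_inter_div {β : Type*} [MetricSpace β]
    [MeasurableSpace β] [BorelSpace β] [SecondCountableTopology β] [HasBesicovitchCovering β]
    (μ : Measure β) [IsLocallyFiniteMeasure μ] {s : Set β} (hs : MeasurableSet s) (h : μ s ≠ 0) :
    ∃ x ∈ s, Tendsto (fun r => μ (sᶜ ∩ closedBall x r) / μ (closedBall x r)) (𝓝[>] 0) (𝓝 0) := by
  have hdens := Besicovitch.ae_tendsto_measure_inter_div_of_measurableSet μ hs.compl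
  obtain ⟨x, hxs, hx⟩ := Measure.exists_mem_of_measure_ne_zero_of_ae h (ae_restrict_of_ae hdens)
  exact ⟨x, hxs, by simpa [hxs] using hx⟩

theorem Real.exists_eventually_volume_closedBall_diff_le {A : Set ℝ} (hA : MeasurableSet A)
    (h : volume A ≠ 0) {ε : ℝ} (hε : 0 < ε) :
    ∃ a, ∀ᶠ r in 𝓝[>] 0, volume (closedBall a r \ A) ≤ ENNReal.ofReal (ε * r) := by
  obtain ⟨a, -, ha⟩ := exists_mem_tendsto_measure_compl_inter_div volume hA h
  refine ⟨a, ?_⟩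
  filter_upwards [ha.eventually (gt_mem_nhds (ENNReal.ofReal_pos.2 (half_pos hε))),
    self_mem_nhdsWithin] with r hr (hr0 : 0 < r)
  rw [Real.volume_closedBall,
    ENNReal.div_lt_iff (.inl (by simpa using hr0)) (.inl ENNReal.ofReal_ne_top),
    ← ENNReal.ofReal_mul (half_pos hε).le] at hr
  rw [sdiff_eq_compl_inter, show ε * r = ε / 2 * (2 * r) by ring]
  exact hr.le

theorem LipschitzOnWith.volume_image_le {f : ℝ → ℝ} {K : ℝ≥0} {s : Set ℝ}
    (hf : LipschitzOnWith K f s) : volume (f '' s) ≤ K * volume s := by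
  simpa [hausdorffMeasure_real] using hf.hausdorffMeasure_image_le zero_le_one

theorem LipschitzOnWith.volume_inter_preimage_le {f g : ℝ → ℝ} {J J' : Set ℝ} {K : ℝ≥0}
    (hf : LipschitzOnWith K f J') (hg : MapsTo g J J') (hfg : LeftInvOn f g J) (T : Set ℝ) :
    volume (J ∩ g ⁻¹' T) ≤ K * volume T :=
  calc volume (J ∩ g ⁻¹' T) ≤ volume (f '' (J' ∩ T)) :=
        measure_mono fun t ⟨ht, hgt⟩ => ⟨g t, ⟨hg ht, hgt⟩, hfg ht⟩
    _ ≤ K * volume (J' ∩ T) := (hf.mono inter_subset_left).volume_image_le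
    _ ≤ K * volume T := by gcongr; exact inter_subset_right

theorem mapsTo_sqrt_one_sub_sq :
    MapsTo (fun t : ℝ => √(1 - t ^ 2)) (Icc (3 / 5) (4 / 5)) (Icc (3 / 5) (4 / 5)) := by
  rintro t ⟨ht₁, ht₂⟩
  constructor
  · rw [Real.le_sqrt (by norm_num) (by nlinarith)]; nlinarith
  · rw [Real.sqrt_le_left (by norm_num)]; nlinarith

theorem leftInvOn_sqrt_one_sub_sq :
    LeftInvOn (fun t : ℝ => √(1 - t ^ 2)) (fun t : ℝ => √(1 - t ^ 2)) (Icc 0 1) := by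
  rintro t ⟨ht₀, ht₁⟩
  dsimp only
  rw [Real.sq_sqrt (by nlinarith), sub_sub_cancel, Real.sqrt_sq ht₀]

theorem lipschitzOnWith_sqrt_one_sub_sq :
    LipschitzOnWith 2 (fun t : ℝ => √(1 - t ^ 2)) (Icc (3 / 5) (4 / 5)) := by
  refine LipschitzOnWith.of_dist_le_mul fun s hs t ht => ?_
  -- `(√(1 - s²) - √(1 - t²)) (√(1 - s²) + √(1 - t²)) = (t - s) (t + s)` and `√(1 - s²) ≥ 3/5`
  obtain ⟨hgs, -⟩ := mapsTo_sqrt_one_sub_sq hs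
  obtain ⟨hgt, -⟩ := mapsTo_sqrt_one_sub_sq ht
  obtain ⟨hs₁, hs₂⟩ := hs
  obtain ⟨ht₁, ht₂⟩ := ht
  have hs2 := Real.sq_sqrt (show 0 ≤ 1 - s ^ 2 by nlinarith)
  have ht2 := Real.sq_sqrt (show 0 ≤ 1 - t ^ 2 by nlinarith)
  simp only [Real.dist_eq, NNReal.coe_ofNat]
  rw [abs_le]
  constructor <;> cases abs_cases (s - t) <;> nlinarith

theorem exists_mem_closedBall_sub_mem_and_sub_mem {A B J : Set ℝ} {g : ℝ → ℝ} {K L : ℝ≥0}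
    {a b c h u v : ℝ} (hg : LipschitzOnWith K g J)
    (hpre : ∀ T, volume (J ∩ g ⁻¹' T) ≤ L * volume T) (hJ : closedBall c h ⊆ J)
    (hu : |u - (a + c)| < h) (hv : |v - (b + g c)| < h)
    (hAB : volume (closedBall a ((K + 2) * h) \ A) +
      L * volume (closedBall b ((K + 2) * h) \ B) < ENNReal.ofReal (2 * h)) :
    ∃ t ∈ closedBall c h, u - t ∈ A ∧ v - g t ∈ B := by
  set R := (K + 2) * h
  have hh : 0 ≤ h := (abs_nonneg _).trans hu.le
  have hc : c ∈ J := hJ (mem_closedBall_self hh)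
  by_contra! hbad
  have hcover : closedBall c h ⊆
      (u - ·) ⁻¹' (closedBall a R \ A) ∪ J ∩ g ⁻¹' ((v - ·) ⁻¹' (closedBall b R \ B)) := by
    intro t ht
    have hct : |t - c| ≤ h := by rwa [mem_closedBall, Real.dist_eq] at ht
    by_cases htA : u - t ∈ A
    · refine .inr ⟨hJ ht, ?_, hbad t ht htA⟩
      have hgt : |g t - g c| ≤ K * |t - c| := by
        simpa only [Real.dist_eq] using lipschitzOnWith_iff_dist_le_mul.1 hg t (hJ ht) c hc
      rw [mem_closedBall, Real.dist_eq]
      calc |v - g t - b| = |(v - (b + g c)) - (g t - g c)| := by ring_nf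
        _ ≤ |v - (b + g c)| + |g t - g c| := abs_sub _ _
        _ ≤ R := by simp only [R]; nlinarith [K.coe_nonneg]
    · refine .inl ⟨?_, htA⟩
      rw [mem_closedBall, Real.dist_eq]
      calc |u - t - a| = |(u - (a + c)) - (t - c)| := by ring_nf
        _ ≤ |u - (a + c)| + |t - c| := abs_sub _ _
        _ ≤ R := by simp only [R]; nlinarith [K.coe_nonneg]
  refine hAB.not_ge ?_
  calc ENNReal.ofReal (2 * h) = volume (closedBall c h) := (Real.volume_closedBall c h).symm
    _ ≤ volume ((u - ·) ⁻¹' (closedBall a R \ A)) +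
          volume (J ∩ g ⁻¹' ((v - ·) ⁻¹' (closedBall b R \ B))) :=
        (measure_mono hcover).trans (measure_union_le _ _)
    _ ≤ volume (closedBall a R \ A) + L * volume (closedBall b R \ B) :=
        add_le_add ((volume.measurePreserving_sub_left u).measure_preimage_le _) ((hpre _).trans
          (mul_le_mul_right ((volume.measurePreserving_sub_left v).measure_preimage_le _) _))

theorem nonempty_interior_prod_add_graph {A B J : Set ℝ} (hAm : MeasurableSet A)
    (hBm : MeasurableSet B) (hA : volume A ≠ 0) (hB : volume B ≠ 0) {g : ℝ → ℝ} {c : ℝ}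
    {K L : ℝ≥0} (hJ : J ∈ 𝓝 c) (hg : LipschitzOnWith K g J)
    (hpre : ∀ T, volume (J ∩ g ⁻¹' T) ≤ L * volume T) :
    (interior (A ×ˢ B + (fun t => (t, g t)) '' J)).Nonempty := by
  -- chosen so that the two exceptional sets have total measure at most `h`
  set ε : ℝ := 1 / ((1 + L) * (K + 2))
  have hε : 0 < ε := by positivity
  obtain ⟨a, ha⟩ := Real.exists_eventually_volume_closedBall_diff_le hAm hA hε
  obtain ⟨b, hb⟩ := Real.exists_eventually_volume_closedBall_diff_le hBm hB hε
  have hK : (0 : ℝ) < K + 2 := by positivity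
  obtain ⟨h, hh : 0 < h, hJh, hah, hbh⟩ := (eventually_mem_nhdsWithin.and <|
    ((eventually_closedBall_subset hJ).filter_mono nhdsWithin_le_nhds).and <|
      (eventually_nhdsGT_zero_mul_left hK ha).and (eventually_nhdsGT_zero_mul_left hK hb)).exists
  have hAB : volume (closedBall a ((K + 2) * h) \ A) +
      L * volume (closedBall b ((K + 2) * h) \ B) < ENNReal.ofReal (2 * h) :=
    calc _ ≤ ENNReal.ofReal (ε * ((K + 2) * h)) + L * ENNReal.ofReal (ε * ((K + 2) * h)) := by
          gcongr
      _ = ENNReal.ofReal h := by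
          rw [← ENNReal.ofReal_coe_nnreal, ← ENNReal.ofReal_mul L.coe_nonneg,
            ← ENNReal.ofReal_add (by positivity) (by positivity)]
          congr 1
          simp only [ε]
          field_simp
      _ < ENNReal.ofReal (2 * h) := (ENNReal.ofReal_lt_ofReal_iff (by positivity)).2 (by linarith)
  refine ⟨(a + c, b + g c), mem_interior.2 ⟨ball _ h, ?_, isOpen_ball, mem_ball_self hh⟩⟩
  rintro ⟨u, v⟩ huv
  rw [← ball_prod_same, mem_prod, mem_ball, mem_ball, Real.dist_eq, Real.dist_eq] at huv
  obtain ⟨t, ht, htA, htB⟩ :=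
    exists_mem_closedBall_sub_mem_and_sub_mem hg hpre hJh huv.1 huv.2 hAB
  exact ⟨(u - t, v - g t), ⟨htA, htB⟩, (t, g t), ⟨t, hJh ht, rfl⟩, by simp⟩

theorem mem_sphere_sqrt_one_sub_sq {t : ℝ} (ht : t ^ 2 ≤ 1) :
    !₂[t, √(1 - t ^ 2)] ∈ sphere (0 : EuclideanSpace ℝ (Fin 2)) 1 := by
  rw [mem_sphere_zero_iff_norm, EuclideanSpace.norm_eq, Fin.sum_univ_two]
  simp [Real.sq_sqrt (sub_nonneg.2 ht)]

theorem stmt_7 (A B : Set ℝ)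
    (hAm : MeasurableSet A) (hBm : MeasurableSet B)
    (hA : 0 < volume A) (hB : 0 < volume B) :
    (interior ({p : EuclideanSpace ℝ (Fin 2) | p 0 ∈ A ∧ p 1 ∈ B} +
      Metric.sphere (0 : EuclideanSpace ℝ (Fin 2)) 1)).Nonempty := by
  obtain ⟨p, hp⟩ := nonempty_interior_prod_add_graph hAm hBm hA.ne' hB.ne' (c := 7 / 10)
    (Icc_mem_nhds (by norm_num) (by norm_num)) lipschitzOnWith_sqrt_one_sub_sq
    (lipschitzOnWith_sqrt_one_sub_sq.volume_inter_preimage_le mapsTo_sqrt_one_sub_sq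
      (leftInvOn_sqrt_one_sub_sq.mono fun t ht => ⟨by linarith [ht.1], by linarith [ht.2]⟩))
  have he : Continuous fun q : EuclideanSpace ℝ (Fin 2) => (q 0, q 1) := by fun_prop
  refine ⟨!₂[p.1, p.2], interior_mono ?_ (preimage_interior_subset_interior_preimage he hp)⟩
  rintro q ⟨⟨a, b⟩, ⟨ha, hb⟩, _, ⟨t, ⟨ht₁, ht₂⟩, rfl⟩, hq⟩
  simp only [Prod.mk_add_mk, Prod.mk.injEq] at hq
  refine ⟨q - !₂[t, √(1 - t ^ 2)], ⟨?_, ?_⟩, _, mem_sphere_sqrt_one_sub_sq (by nlinarith),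
    sub_add_cancel _ _⟩
  · simpa [← hq.1] using ha
  · simpa [← hq.2] using hb
end

section
/- Let Λ ⊆ ℝ be a non-empty open interval, J₁, J₂ compact intervals, and H ∈ C¹(Λ × J₁ × J₂) with nowhere vanishing partial derivatives H_x, H_y. Suppose A ⊆ J₁ is such that J₁ \ A is countable with J₁ non-degenerate, and B ⊆ J₂ is uncountable. Then there is a non-empty open interval I ⊆ Λ such that ⋂_{α ∈ I} {H(α,x,y) : x ∈ A, y ∈ B} has non-empty interior. -/
open Set

lemma aux_inj {f f' : ℝ → ℝ} {c d : ℝ}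
    (h : ∀ x ∈ Icc c d, HasDerivAt f (f' x) x ∧ f' x ≠ 0) :
    InjOn f (Icc c d) := by
  have key : ∀ x ∈ Icc c d, ∀ y ∈ Icc c d, x < y → f x ≠ f y := by
    intro x hx y hy hlt heq
    have hsub : Icc x y ⊆ Icc c d := Icc_subset_Icc hx.1 hy.2
    have hcont : ContinuousOn f (Icc x y) := fun z hz =>
      ((h z (hsub hz)).1).continuousAt.continuousWithinAt
    obtain ⟨ξ, hξ, hval⟩ := exists_hasDerivAt_eq_slope f f' hlt hcont
      (fun z hz => (h z (hsub (Ioo_subset_Icc_self hz))).1)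
    have hz : f' ξ = 0 := by rw [hval, heq]; simp
    exact (h ξ (hsub (Ioo_subset_Icc_self hξ))).2 hz
  intro x hx y hy hxy
  rcases lt_trichotomy x y with hlt | he | hlt
  · exact absurd hxy (key x hx y hy hlt)
  · exact he
  · exact absurd hxy.symm (key y hy x hx hlt)

lemma aux_cond {B : Set ℝ} (hB : ¬ B.Countable) :
    ∃ y₀ ∈ B, ∀ ε > 0, ¬ (B ∩ Ioo (y₀ - ε) (y₀ + ε)).Countable := by
  by_contra hcon
  push_neg at hcon
  apply hB
  have hU : (⋃ q ∈ {q : ℚ × ℚ | (B ∩ Ioo (q.1 : ℝ) (q.2 : ℝ)).Countable},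
      B ∩ Ioo (q.1 : ℝ) (q.2 : ℝ)).Countable :=
    Set.Countable.biUnion (Set.to_countable _) (fun q hq => hq)
  refine hU.mono ?_
  intro y hy
  obtain ⟨ε, hε, hc⟩ := hcon y hy
  obtain ⟨q₁, hq₁, hq₁'⟩ := exists_rat_btwn (show y - ε < y by linarith)
  obtain ⟨q₂, hq₂, hq₂'⟩ := exists_rat_btwn (show y < y + ε by linarith)
  have hsub : B ∩ Ioo (q₁ : ℝ) (q₂ : ℝ) ⊆ B ∩ Ioo (y - ε) (y + ε) :=
    inter_subset_inter_right _ (Ioo_subset_Ioo hq₁.le hq₂'.le)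
  have : y ∈ B ∩ Ioo ((q₁ : ℝ)) (q₂ : ℝ) := ⟨hy, hq₁', hq₂⟩
  exact mem_biUnion (show ((q₁, q₂) : ℚ × ℚ) ∈ {q : ℚ × ℚ | (B ∩ Ioo (q.1 : ℝ) (q.2 : ℝ)).Countable} from hc.mono hsub) this

lemma aux_uIcc {u v p q h δ : ℝ} (hδ : δ = |v - u| / 4)
    (hp : |p - u| < δ) (hq : |q - v| < δ)
    (hh1 : min u v + δ < h) (hh2 : h < max u v - δ) : h ∈ uIcc p q := by
  rcases abs_sub_lt_iff.1 hp with ⟨hp1, hp2⟩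
  rcases abs_sub_lt_iff.1 hq with ⟨hq1, hq2⟩
  rcases le_total u v with hle | hle
  · rw [min_eq_left hle] at hh1
    rw [max_eq_right hle] at hh2
    rw [Set.mem_uIcc]
    left
    constructor <;> linarith
  · have habs : |v - u| = u - v := by rw [abs_sub_comm]; exact abs_of_nonneg (by linarith)
    rw [min_eq_right hle] at hh1
    rw [max_eq_left hle] at hh2
    rw [Set.mem_uIcc]
    right
    constructor <;> [linarith; linarith]

theorem stmt_10 (a b c₁ d₁ c₂ d₂ : ℝ) (hab : a < b) (h₁ : c₁ < d₁) (h₂ : c₂ ≤ d₂)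
    (H Hx Hy : ℝ → ℝ → ℝ → ℝ)
    (hC1 : ContDiffOn ℝ 1 (fun p : ℝ × ℝ × ℝ => H p.1 p.2.1 p.2.2)
      (Ioo a b ×ˢ Icc c₁ d₁ ×ˢ Icc c₂ d₂))
    (hHx : ∀ α ∈ Ioo a b, ∀ x ∈ Icc c₁ d₁, ∀ y ∈ Icc c₂ d₂,
      HasDerivAt (fun s => H α s y) (Hx α x y) x ∧ Hx α x y ≠ 0)
    (hHy : ∀ α ∈ Ioo a b, ∀ x ∈ Icc c₁ d₁, ∀ y ∈ Icc c₂ d₂,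
      HasDerivAt (fun s => H α x s) (Hy α x y) y ∧ Hy α x y ≠ 0)
    (A B : Set ℝ) (hA : A ⊆ Icc c₁ d₁) (hB : B ⊆ Icc c₂ d₂)
    (hAco : (Icc c₁ d₁ \ A).Countable) (hBunc : ¬ B.Countable) :
    ∃ a' b', a' < b' ∧ Ioo a' b' ⊆ Ioo a b ∧
      (interior (⋂ α ∈ Ioo a' b',
        {h : ℝ | ∃ x ∈ A, ∃ y ∈ B, H α x y = h})).Nonempty := by
  set α₀ := (a + b) / 2 with hα₀def
  have hα₀ : α₀ ∈ Ioo a b := ⟨by simp only [hα₀def]; linarith, by simp only [hα₀def]; linarith⟩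
  obtain ⟨y₀, hy₀B, hy₀⟩ := aux_cond hBunc
  have hy₀J : y₀ ∈ Icc c₂ d₂ := hB hy₀B
  set u := H α₀ c₁ y₀ with hu
  set v := H α₀ d₁ y₀ with hv
  have huv : u ≠ v := by
    have hinj : InjOn (fun x => H α₀ x y₀) (Icc c₁ d₁) :=
      aux_inj (fun x hx => hHx α₀ hα₀ x hx y₀ hy₀J)
    exact fun he => h₁.ne (hinj (left_mem_Icc.2 h₁.le) (right_mem_Icc.2 h₁.le) he)
  set δ := |v - u| / 4 with hδ
  have hδpos : 0 < δ := by
    have h0 : 0 < |v - u| := abs_pos.2 (sub_ne_zero.2 (Ne.symm huv))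
    rw [hδ]; linarith
  have hcontH : ContinuousOn (fun p : ℝ × ℝ × ℝ => H p.1 p.2.1 p.2.2)
      (Ioo a b ×ˢ Icc c₁ d₁ ×ˢ Icc c₂ d₂) := hC1.continuousOn
  have hkey : ∀ e ∈ Icc c₁ d₁, ∃ ε > 0, ∀ α ∈ Ioo a b, |α - α₀| < ε →
      ∀ y ∈ Icc c₂ d₂, |y - y₀| < ε → |H α e y - H α₀ e y₀| < δ := by
    intro e he
    have hmap : MapsTo (fun p : ℝ × ℝ => (p.1, e, p.2)) (Ioo a b ×ˢ Icc c₂ d₂)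
        (Ioo a b ×ˢ Icc c₁ d₁ ×ˢ Icc c₂ d₂) := fun p hp => ⟨hp.1, he, hp.2⟩
    have hc : ContinuousOn (fun p : ℝ × ℝ => H p.1 e p.2) (Ioo a b ×ˢ Icc c₂ d₂) :=
      hcontH.comp (Continuous.continuousOn (by continuity)) hmap
    have hcw : ContinuousWithinAt (fun p : ℝ × ℝ => H p.1 e p.2)
        (Ioo a b ×ˢ Icc c₂ d₂) (α₀, y₀) := hc (α₀, y₀) ⟨hα₀, hy₀J⟩
    rw [Metric.continuousWithinAt_iff] at hcw
    obtain ⟨ε, hε, hball⟩ := hcw δ hδpos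
    refine ⟨ε, hε, ?_⟩
    intro α hαab hα y hyJ hy
    have hd : dist ((α, y) : ℝ × ℝ) ((α₀, y₀) : ℝ × ℝ) < ε := by
      rw [Prod.dist_eq]
      exact max_lt (by rwa [Real.dist_eq]) (by rwa [Real.dist_eq])
    have hfin := hball (⟨hαab, hyJ⟩ : ((α, y) : ℝ × ℝ) ∈ Ioo a b ×ˢ Icc c₂ d₂) hd
    rwa [Real.dist_eq] at hfin
  obtain ⟨ε₁, hε₁, hball₁⟩ := hkey c₁ (left_mem_Icc.2 h₁.le)
  obtain ⟨ε₂, hε₂, hball₂⟩ := hkey d₁ (right_mem_Icc.2 h₁.le)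
  set ε' := min (min ε₁ ε₂) (min (α₀ - a) (b - α₀)) with hε'def
  have hε'pos : 0 < ε' := lt_min (lt_min hε₁ hε₂)
    (lt_min (by simp only [hα₀def]; linarith) (by simp only [hα₀def]; linarith))
  have hε'1 : ε' ≤ ε₁ := (min_le_left _ _).trans (min_le_left _ _)
  have hε'2 : ε' ≤ ε₂ := (min_le_left _ _).trans (min_le_right _ _)
  have hε'3 : ε' ≤ α₀ - a := (min_le_right _ _).trans (min_le_left _ _)
  have hε'4 : ε' ≤ b - α₀ := (min_le_right _ _).trans (min_le_right _ _)
  set lo := min u v + δ with hlo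
  set hi := max u v - δ with hhi
  have hlohi : lo < hi := by
    have h4 : max u v - min u v = |v - u| := by rw [max_sub_min_eq_abs, abs_sub_comm]
    rw [hlo, hhi]; rw [hδ] at hδpos ⊢; linarith
  have hKsub : Ioo lo hi ⊆ ⋂ α ∈ Ioo (α₀ - ε') (α₀ + ε'),
      {h : ℝ | ∃ x ∈ A, ∃ y ∈ B, H α x y = h} := by
    intro h hh
    rw [mem_iInter₂]
    intro α hα
    have hαab : α ∈ Ioo a b := ⟨by linarith [hα.1], by linarith [hα.2]⟩
    have hαd : |α - α₀| < ε' := abs_sub_lt_iff.2 ⟨by linarith [hα.2], by linarith [hα.1]⟩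
    have hYunc := hy₀ ε' hε'pos
    by_contra hno
    simp only [mem_setOf_eq] at hno
    push_neg at hno
    apply hYunc
    have hsubY : B ∩ Ioo (y₀ - ε') (y₀ + ε') ⊆
        ⋃ x ∈ Icc c₁ d₁ \ A, {y ∈ Icc c₂ d₂ | H α x y = h} := by
      intro y hy
      have hyJ : y ∈ Icc c₂ d₂ := hB hy.1
      have hyd : |y - y₀| < ε' := abs_sub_lt_iff.2 ⟨by linarith [hy.2.2], by linarith [hy.2.1]⟩
      have hb1 := hball₁ α hαab (lt_of_lt_of_le hαd hε'1) y hyJ (lt_of_lt_of_le hyd hε'1)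
      have hb2 := hball₂ α hαab (lt_of_lt_of_le hαd hε'2) y hyJ (lt_of_lt_of_le hyd hε'2)
      have hmem : h ∈ uIcc (H α c₁ y) (H α d₁ y) := aux_uIcc hδ hb1 hb2 hh.1 hh.2
      have hcx : ContinuousOn (fun s => H α s y) (uIcc c₁ d₁) := by
        rw [uIcc_of_le h₁.le]
        exact fun z hz => ((hHx α hαab z hz y hyJ).1).continuousAt.continuousWithinAt
      obtain ⟨x, hxmem, hxval⟩ := intermediate_value_uIcc hcx hmem
      rw [uIcc_of_le h₁.le] at hxmem
      have hxA : x ∉ A := fun hxA => hno x hxA y hy.1 hxval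
      exact mem_biUnion (show x ∈ Icc c₁ d₁ \ A from ⟨hxmem, hxA⟩) ⟨hyJ, hxval⟩
    refine Set.Countable.mono hsubY (Set.Countable.biUnion hAco ?_)
    intro x hx
    have hinjy : InjOn (fun s => H α x s) (Icc c₂ d₂) :=
      aux_inj (fun y hy => hHy α hαab x hx.1 y hy)
    apply Set.Subsingleton.countable
    intro y1 hy1 y2 hy2
    exact hinjy hy1.1 hy2.1 (by simp only []; rw [hy1.2, hy2.2])
  refine ⟨α₀ - ε', α₀ + ε', by linarith, ?_, ?_⟩
  · intro α hα
    exact ⟨by linarith [hα.1], by linarith [hα.2]⟩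
  · have hsub2 : Ioo lo hi ⊆ interior (⋂ α ∈ Ioo (α₀ - ε') (α₀ + ε'),
        {h : ℝ | ∃ x ∈ A, ∃ y ∈ B, H α x y = h}) := interior_maximal hKsub isOpen_Ioo
    exact ⟨(lo + hi) / 2, hsub2 ⟨by linarith, by linarith⟩⟩
end

section
/- Let Λ ⊆ ℝ be a non-empty open interval, J₁, J₂ compact intervals, and H ∈ C¹(Λ × J₁ × J₂) with nowhere vanishing partial derivatives H_x, H_y. If A ⊆ J₁ and B ⊆ J₂ are sets of second Baire category in ℝ and B has the Baire property, then there is a non-empty open interval I ⊆ Λ such that ⋂_{α ∈ I} {H(α,x,y) : x ∈ A, y ∈ B} has non-empty interior. -/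
/-!
Fix a point x₀ near which A is of second category, an interval [y₁, y₂] on which B is comeagre
(Baire property), and α₀ ∈ Λ. The partial derivatives do not vanish, so H is injective in x and
in y. With y₀ the midpoint of [y₁, y₂], the intermediate value theorem shows that for (α, x, h)
near (α₀, x₀, H(α₀, x₀, y₀)) the equation H(α, x, y) = h has a unique solution y = g(x) in
[y₁, y₂], and g is continuous and injective on an interval around x₀. Extended to a homeomorphism
of ℝ, g carries the non-meagre set A near x₀ to a non-meagre subset of [y₁, y₂], which therefore
meets B.
-/

open Set Filter Topology

section Meagre

variable {X : Type*} [TopologicalSpace X]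

theorem exists_mem_closure_forall_nhds_not_isMeagre_inter [LindelofSpace X] {A : Set X}
    (hA : ¬IsMeagre A) : ∃ x ∈ closure A, ∀ U ∈ 𝓝 x, ¬IsMeagre (A ∩ U) := by
  obtain ⟨x, hx⟩ : ∃ x, ∀ U ∈ 𝓝 x, ¬IsMeagre (A ∩ U) := by
    by_contra! h
    choose U hU hAU using h
    obtain ⟨t, htc, htU⟩ := LindelofSpace.elim_nhds_subcover U hU
    refine hA ((isMeagre_biUnion htc fun x _ => hAU x).mono fun y hy => ?_)
    obtain ⟨x, hxt, hyx⟩ := mem_iUnion₂.1 (htU ▸ mem_univ y)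
    exact mem_biUnion hxt ⟨hy, hyx⟩
  exact ⟨x, mem_closure_iff_nhds.2 fun U hU =>
    (nonempty_of_not_isMeagre (hx U hU)).mono fun _ h => ⟨h.2, h.1⟩, hx⟩

theorem exists_isOpen_nonempty_isMeagre_diff {B : Set X} (hB : ¬IsMeagre B)
    (hBaire : ∃ E M : Set X, IsOpen E ∧ IsMeagre M ∧ B = symmDiff E M) :
    ∃ U, IsOpen U ∧ U.Nonempty ∧ IsMeagre (U \ B) := by
  obtain ⟨E, M, hE, hM, rfl⟩ := hBaire
  refine ⟨E, hE, nonempty_iff_ne_empty.2 fun hE₀ => hB ?_, hM.mono fun x hx => ?_⟩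
  · rwa [hE₀, ← bot_eq_empty, bot_symmDiff]
  · by_contra hxM
    exact hx.2 (mem_symmDiff.2 (Or.inl ⟨hx.1, hxM⟩))

theorem IsOpen.subset_of_isMeagre_diff [BaireSpace X] {U B C : Set X} (hU : IsOpen U)
    (hUB : IsMeagre (U \ B)) (hBC : B ⊆ C) (hC : IsClosed C) : U ⊆ C := by
  by_contra h
  obtain ⟨x, hxU, hxC⟩ := not_subset.1 h
  exact not_isMeagre_of_isOpen (hU.sdiff hC) ⟨x, hxU, hxC⟩ (hUB.mono (sdiff_subset_sdiff_right hBC))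

end Meagre

theorem exists_Icc_subset_Ioo_isMeagre_diff {B : Set ℝ} {c d : ℝ} (hB : B ⊆ Icc c d)
    (hBcat : ¬IsMeagre B) (hBaire : ∃ E M : Set ℝ, IsOpen E ∧ IsMeagre M ∧ B = symmDiff E M) :
    ∃ y₁ y₂, y₁ < y₂ ∧ Icc y₁ y₂ ⊆ Ioo c d ∧ IsMeagre (Icc y₁ y₂ \ B) := by
  obtain ⟨U, hU, ⟨t, ht⟩, hUB⟩ := exists_isOpen_nonempty_isMeagre_diff hBcat hBaire
  have hUcd : U ⊆ Ioo c d :=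
    interior_Icc (a := c) ▸ interior_maximal (hU.subset_of_isMeagre_diff hUB hB isClosed_Icc) hU
  obtain ⟨ε, hε, hball⟩ := Metric.isOpen_iff.1 hU t ht
  have htε : Icc (t - ε / 2) (t + ε / 2) ⊆ U := by
    rw [← Real.closedBall_eq_Icc]
    exact (Metric.closedBall_subset_ball (half_lt_self hε)).trans hball
  exact ⟨t - ε / 2, t + ε / 2, by linarith, htε.trans hUcd, hUB.mono (sdiff_subset_sdiff_left htε)⟩

theorem injOn_of_hasDerivAt_ne_zero {f f' : ℝ → ℝ} {s : Set ℝ} (hs : s.OrdConnected)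
    (hf : ∀ x ∈ s, HasDerivAt f (f' x) x) (hf' : ∀ x ∈ s, f' x ≠ 0) : InjOn f s := by
  intro u hu v hv huv
  by_contra hne
  wlog h : u < v generalizing u v
  · exact this hv hu huv.symm (Ne.symm hne) (lt_of_le_of_ne (not_lt.1 h) (Ne.symm hne))
  have huvs : Icc u v ⊆ s := hs.out hu hv
  obtain ⟨w, hw, hw0⟩ := exists_hasDerivAt_eq_zero h
    (fun x hx => (hf x (huvs hx)).continuousAt.continuousWithinAt) huv
    (fun x hx => hf x (huvs (Ioo_subset_Icc_self hx)))
  exact hf' w (huvs (Ioo_subset_Icc_self hw)) hw0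

theorem mul_sub_neg_of_injOn {φ : ℝ → ℝ} {y₁ y y₂ : ℝ} (hc : ContinuousOn φ (Icc y₁ y₂))
    (hi : InjOn φ (Icc y₁ y₂)) (hy : y ∈ Ioo y₁ y₂) :
    (φ y₁ - φ y) * (φ y₂ - φ y) < 0 := by
  have h₁ : y₁ ∈ Icc y₁ y₂ := left_mem_Icc.2 (hy.1.trans hy.2).le
  have h₂ : y₂ ∈ Icc y₁ y₂ := right_mem_Icc.2 (hy.1.trans hy.2).le
  have h : y ∈ Icc y₁ y₂ := Ioo_subset_Icc_self hy
  rcases hc.strictMonoOn_of_injOn_Icc' (hy.1.trans hy.2).le hi with hm | ha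
  · exact mul_neg_of_neg_of_pos (sub_neg.2 (hm h₁ h hy.1)) (sub_pos.2 (hm h h₂ hy.2))
  · exact mul_neg_of_pos_of_neg (sub_pos.2 (ha h₁ h hy.1)) (sub_neg.2 (ha h h₂ hy.2))

theorem eventually_exists_eq_zero_of_mul_neg {X : Type*} [TopologicalSpace X] {f : X → ℝ → ℝ}
    {s : Set X} {z₀ : X} {y₁ y₂ : ℝ} (hy : y₁ ≤ y₂)
    (hf : ∀ z ∈ s, ContinuousOn (f z) (Icc y₁ y₂)) (h₁ : ContinuousWithinAt (f · y₁) s z₀)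
    (h₂ : ContinuousWithinAt (f · y₂) s z₀) (hneg : f z₀ y₁ * f z₀ y₂ < 0) :
    ∀ᶠ z in 𝓝[s] z₀, ∃ y ∈ Icc y₁ y₂, f z y = 0 := by
  filter_upwards [(h₁.mul h₂).eventually (Iio_mem_nhds hneg), self_mem_nhdsWithin]
    with z hz hzs
  have h0 : (0 : ℝ) ∈ uIcc (f z y₁) (f z y₂) := by
    rcases mul_neg_iff.1 hz with h | h
    · exact mem_uIcc.2 (Or.inr ⟨h.2.le, h.1.le⟩)
    · exact mem_uIcc.2 (Or.inl ⟨h.1.le, h.2.le⟩)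
  have := intermediate_value_uIcc ((uIcc_of_le hy).symm ▸ hf z hzs) h0
  rwa [uIcc_of_le hy] at this

theorem exists_homeomorph_eqOn_Icc_of_strictMonoOn {p q : ℝ} {g : ℝ → ℝ} (hpq : p ≤ q)
    (hc : ContinuousOn g (Icc p q)) (hm : StrictMonoOn g (Icc p q)) :
    ∃ e : ℝ ≃ₜ ℝ, EqOn e g (Icc p q) := by
  set c : ℝ → ℝ := fun t => max p (min q t)
  have hcI : ∀ t, c t ∈ Icc p q := fun t => ⟨le_max_left _ _, max_le hpq (min_le_left _ _)⟩
  have hcc : Continuous c := by fun_prop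
  have hc_mono : Monotone c := fun t t' h => max_le_max le_rfl (min_le_min le_rfl h)
  have hc_sub_mono : Monotone fun t => t - c t := by
    intro t t' h
    simp only [c, max_def, min_def]
    split_ifs <;> linarith
  set f : ℝ → ℝ := fun t => g (c t) + (t - c t)
  have hf : StrictMono f := by
    intro t t' htt'
    rcases (hc_mono htt'.le).lt_or_eq with hlt | heq
    · exact add_lt_add_of_lt_of_le (hm (hcI t) (hcI t') hlt) (hc_sub_mono htt'.le)
    · simp only [f, heq]
      linarith
  have hfc : Continuous f := (hc.comp_continuous hcc hcI).add (continuous_id.sub hcc)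
  have hf_top : Tendsto f atTop atTop := by
    refine (tendsto_atTop_add_const_right _ (g q - q) tendsto_id).congr' ?_
    filter_upwards [eventually_ge_atTop q] with t ht
    simp only [f, c, min_eq_left ht, max_eq_right hpq, id]
    ring
  have hf_bot : Tendsto f atBot atBot := by
    refine (tendsto_atBot_add_const_right _ (g p - p) tendsto_id).congr' ?_
    filter_upwards [eventually_le_atBot p] with t ht
    simp only [f, c, min_eq_right (ht.trans hpq), max_eq_left ht, id]
    ring
  refine ⟨(hf.orderIsoOfSurjective f (hfc.surjective hf_top hf_bot)).toHomeomorph,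
    fun t ht => ?_⟩
  have hct : c t = t := by simp only [c, min_eq_right ht.2, max_eq_right ht.1]
  change f t = g t
  simp only [f, hct, sub_self, add_zero]

theorem exists_homeomorph_eqOn_Icc_of_injOn {p q : ℝ} {g : ℝ → ℝ} (hpq : p ≤ q)
    (hc : ContinuousOn g (Icc p q)) (hi : InjOn g (Icc p q)) :
    ∃ e : ℝ ≃ₜ ℝ, EqOn e g (Icc p q) := by
  rcases hc.strictMonoOn_of_injOn_Icc' hpq hi with hm | ha
  · exact exists_homeomorph_eqOn_Icc_of_strictMonoOn hpq hc hm
  · obtain ⟨e, he⟩ := exists_homeomorph_eqOn_Icc_of_strictMonoOn hpq hc.neg ha.neg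
    exact ⟨e.trans (Homeomorph.neg ℝ), fun t ht => by simp [he ht]⟩

theorem exists_mem_apply_mem_of_injOn {p q : ℝ} {g : ℝ → ℝ} {S V B : Set ℝ} (hpq : p ≤ q)
    (hc : ContinuousOn g (Icc p q)) (hi : InjOn g (Icc p q)) (hS : ¬IsMeagre S)
    (hSpq : S ⊆ Icc p q) (hSV : MapsTo g S V) (hVB : IsMeagre (V \ B)) :
    ∃ x ∈ S, g x ∈ B := by
  obtain ⟨e, he⟩ := exists_homeomorph_eqOn_Icc_of_injOn hpq hc hi
  by_contra! h
  refine hS ((hVB.preimage_of_isOpenMap e.continuous e.isOpenMap).mono fun x hx => ?_)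
  rw [mem_preimage, he (hSpq hx)]
  exact ⟨hSV hx, h x hx⟩

theorem continuousOn_of_forall_apply_eq {F : ℝ → ℝ → ℝ} {g : ℝ → ℝ} {I : Set ℝ} {c d h : ℝ}
    (hF : ContinuousOn (Function.uncurry F) (I ×ˢ Icc c d))
    (hinj : ∀ x ∈ I, InjOn (F x) (Icc c d)) (hg : ∀ x ∈ I, g x ∈ Ioo c d ∧ F x (g x) = h) :
    ContinuousOn g I := by
  intro x₀ hx₀
  obtain ⟨⟨hcg, hgd⟩, hFg⟩ := hg x₀ hx₀
  rw [ContinuousWithinAt, Metric.nhds_basis_closedBall.tendsto_right_iff]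
  intro ε hε
  set δ := min ε (min (g x₀ - c) (d - g x₀))
  have hδ : 0 < δ := lt_min hε (lt_min (by linarith) (by linarith))
  have hδε : δ ≤ ε := min_le_left _ _
  have hδcd : Icc (g x₀ - δ) (g x₀ + δ) ⊆ Icc c d := by
    have hδ' : δ ≤ min (g x₀ - c) (d - g x₀) := min_le_right _ _
    exact Icc_subset_Icc (by linarith [min_le_left (g x₀ - c) (d - g x₀)])
      (by linarith [min_le_right (g x₀ - c) (d - g x₀)])
  have hslice : ∀ x ∈ I, ContinuousOn (F x) (Icc c d) := fun x hx => hF.uncurry_left x hx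
  have hsliceAt : ∀ y ∈ Icc c d, ContinuousWithinAt (F · y) I x₀ := fun y hy =>
    hF.uncurry_right y hy x₀ hx₀
  -- The sign change of `F x₀ · - h` around `g x₀` persists for nearby `x`,
  -- which traps the unique solution `g x` within `δ` of `g x₀`.
  have hsign : (F x₀ (g x₀ - δ) - h) * (F x₀ (g x₀ + δ) - h) < 0 := by
    rw [← hFg]
    exact mul_sub_neg_of_injOn ((hslice x₀ hx₀).mono hδcd) ((hinj x₀ hx₀).mono hδcd)
      ⟨by linarith, by linarith⟩
  have hev := eventually_exists_eq_zero_of_mul_neg (f := fun x y => F x y - h) (s := I)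
    (by linarith) (fun x hx => ((hslice x hx).mono hδcd).sub continuousOn_const)
    ((hsliceAt _ (hδcd (left_mem_Icc.2 (by linarith)))).sub continuousWithinAt_const)
    ((hsliceAt _ (hδcd (right_mem_Icc.2 (by linarith)))).sub continuousWithinAt_const) hsign
  filter_upwards [hev, self_mem_nhdsWithin] with x ⟨y, hy, hxy⟩ hx
  have hgx : g x = y := hinj x hx (Ioo_subset_Icc_self (hg x hx).1) (hδcd hy)
    (by rw [(hg x hx).2]; linarith)
  rw [Metric.mem_closedBall, hgx, Real.dist_eq, abs_le]
  constructor <;> linarith [hy.1, hy.2]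

theorem mem_image2_of_forall_exists_eq {F : ℝ → ℝ → ℝ} {p q c d h : ℝ} {S V B : Set ℝ}
    (hpq : p ≤ q) (hF : ContinuousOn (Function.uncurry F) (Icc p q ×ˢ Icc c d))
    (hinjx : ∀ y ∈ Icc c d, InjOn (F · y) (Icc p q))
    (hinjy : ∀ x ∈ Icc p q, InjOn (F x) (Icc c d)) (hVcd : V ⊆ Ioo c d)
    (hsol : ∀ x ∈ Icc p q, ∃ y ∈ V, F x y = h) (hS : ¬IsMeagre S) (hSpq : S ⊆ Icc p q)
    (hVB : IsMeagre (V \ B)) : h ∈ image2 F S B := by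
  set g : ℝ → ℝ := fun x => Function.invFunOn (F x) V h
  have hg : ∀ x ∈ Icc p q, g x ∈ V ∧ F x (g x) = h := fun x hx => Function.invFunOn_pos (hsol x hx)
  have hgc : ContinuousOn g (Icc p q) :=
    continuousOn_of_forall_apply_eq hF hinjy fun x hx => ⟨hVcd (hg x hx).1, (hg x hx).2⟩
  have hgi : InjOn g (Icc p q) := fun u hu v hv huv =>
    hinjx (g u) (Ioo_subset_Icc_self (hVcd (hg u hu).1)) hu hv
      (by simp only; rw [(hg u hu).2, huv, (hg v hv).2])
  obtain ⟨x, hxS, hxB⟩ :=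
    exists_mem_apply_mem_of_injOn hpq hgc hgi hS hSpq (fun x hx => (hg x (hSpq hx)).1) hVB
  exact ⟨x, hxS, g x, hxB, (hg x (hSpq hxS)).2⟩

section Family

variable {H : ℝ → ℝ → ℝ → ℝ} {a b c₁ d₁ c₂ d₂ α₀ x₀ y₁ y₂ : ℝ}

theorem exists_pos_forall_exists_eq
    (hH : ContinuousOn (fun p : ℝ × ℝ × ℝ => H p.1 p.2.1 p.2.2)
      (Ioo a b ×ˢ Icc c₁ d₁ ×ˢ Icc c₂ d₂))
    (hα₀ : α₀ ∈ Ioo a b) (hx₀ : x₀ ∈ Icc c₁ d₁) (hinj : InjOn (H α₀ x₀) (Icc c₂ d₂))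
    (hy : y₁ < y₂) (hyc : Icc y₁ y₂ ⊆ Icc c₂ d₂) :
    ∃ r > 0, ∀ α ∈ Ioo a b, ∀ x ∈ Icc c₁ d₁, ∀ h, |α - α₀| < r → |x - x₀| < r →
      |h - H α₀ x₀ ((y₁ + y₂) / 2)| < r → ∃ y ∈ Icc y₁ y₂, H α x y = h := by
  set s : Set (ℝ × ℝ × ℝ) := Ioo a b ×ˢ Icc c₁ d₁ ×ˢ univ
  have hslice : ∀ α ∈ Ioo a b, ∀ x ∈ Icc c₁ d₁, ContinuousOn (H α x) (Icc c₂ d₂) :=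
    fun α hα x hx =>
      (hH.uncurry_left (f := fun (α : ℝ) (q : ℝ × ℝ) => H α q.1 q.2) α hα).uncurry_left
        (f := H α) x hx
  have hcont : ∀ y ∈ Icc c₂ d₂,
      ContinuousOn (fun z : ℝ × ℝ × ℝ => H z.1 z.2.1 y - z.2.2) s := fun y hy =>
    (hH.comp (Continuous.continuousOn (f := fun z : ℝ × ℝ × ℝ => (z.1, z.2.1, y))
      (by fun_prop)) fun z hz => ⟨hz.1, hz.2.1, hy⟩).sub (by fun_prop)
  have hz₀ : (α₀, x₀, H α₀ x₀ ((y₁ + y₂) / 2)) ∈ s := ⟨hα₀, hx₀, mem_univ _⟩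
  have hev := eventually_exists_eq_zero_of_mul_neg
    (f := fun (z : ℝ × ℝ × ℝ) (y : ℝ) => H z.1 z.2.1 y - z.2.2) (s := s) hy.le
    (fun z hz => ((hslice z.1 hz.1 z.2.1 hz.2.1).mono hyc).sub continuousOn_const)
    (hcont y₁ (hyc (left_mem_Icc.2 hy.le)) _ hz₀)
    (hcont y₂ (hyc (right_mem_Icc.2 hy.le)) _ hz₀)
    (mul_sub_neg_of_injOn ((hslice α₀ hα₀ x₀ hx₀).mono hyc) (hinj.mono hyc)
      ⟨by linarith, by linarith⟩)
  obtain ⟨r, hr, hball⟩ := Metric.mem_nhdsWithin_iff.1 hev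
  refine ⟨r, hr, fun α hα x hx h hαr hxr hhr => ?_⟩
  have hmem : (α, x, h) ∈ Metric.ball (α₀, x₀, H α₀ x₀ ((y₁ + y₂) / 2)) r := by
    simp only [Metric.mem_ball, Prod.dist_eq, Real.dist_eq]
    exact max_lt hαr (max_lt hxr hhr)
  obtain ⟨y, hy, hxy⟩ := hball ⟨hmem, hα, hx, mem_univ h⟩
  exact ⟨y, hy, sub_eq_zero.1 hxy⟩

theorem exists_forall_Ioo_subset_image2
    (hH : ContinuousOn (fun p : ℝ × ℝ × ℝ => H p.1 p.2.1 p.2.2)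
      (Ioo a b ×ˢ Icc c₁ d₁ ×ˢ Icc c₂ d₂))
    (hinjx : ∀ α ∈ Ioo a b, ∀ y ∈ Icc c₂ d₂, InjOn (H α · y) (Icc c₁ d₁))
    (hinjy : ∀ α ∈ Ioo a b, ∀ x ∈ Icc c₁ d₁, InjOn (H α x) (Icc c₂ d₂))
    (hα₀ : α₀ ∈ Ioo a b) (hx₀ : x₀ ∈ Icc c₁ d₁) (hy : y₁ < y₂) (hyc : Icc y₁ y₂ ⊆ Ioo c₂ d₂)
    {A B : Set ℝ} (hA : A ⊆ Icc c₁ d₁) (hAx₀ : ∀ U ∈ 𝓝 x₀, ¬IsMeagre (A ∩ U))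
    (hB : IsMeagre (Icc y₁ y₂ \ B)) :
    ∃ a' b', a' < b' ∧ Ioo a' b' ⊆ Ioo a b ∧
      ∃ h₁ h₂, h₁ < h₂ ∧ ∀ α ∈ Ioo a' b', Ioo h₁ h₂ ⊆ image2 (H α) A B := by
  obtain ⟨r, hr, hsol⟩ := exists_pos_forall_exists_eq hH hα₀ hx₀ (hinjy α₀ hα₀ x₀ hx₀) hy
    (hyc.trans Ioo_subset_Icc_self)
  set h₀ := H α₀ x₀ ((y₁ + y₂) / 2)
  set r' := min r (min (α₀ - a) (b - α₀))
  have hr' : 0 < r' := lt_min hr (lt_min (sub_pos.2 hα₀.1) (sub_pos.2 hα₀.2))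
  have hr'r : r' ≤ r := min_le_left _ _
  have hr'a : r' ≤ α₀ - a := (min_le_right _ _).trans (min_le_left _ _)
  have hr'b : r' ≤ b - α₀ := (min_le_right _ _).trans (min_le_right _ _)
  refine ⟨α₀ - r', α₀ + r', by linarith, fun α hα => ⟨by linarith [hα.1], by linarith [hα.2]⟩,
    h₀ - r, h₀ + r, by linarith, fun α hα h hh => ?_⟩
  have hαab : α ∈ Ioo a b := ⟨by linarith [hα.1], by linarith [hα.2]⟩
  set p := max c₁ (x₀ - r / 2)
  set q := min d₁ (x₀ + r / 2)
  have hpq : Icc p q ⊆ Icc c₁ d₁ := Icc_subset_Icc (le_max_left _ _) (min_le_left _ _)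
  have hSpq : A ∩ Ioo (x₀ - r / 2) (x₀ + r / 2) ⊆ Icc p q := fun x hx =>
    ⟨max_le (hA hx.1).1 hx.2.1.le, le_min (hA hx.1).2 hx.2.2.le⟩
  have hp_le_q : p ≤ q :=
    max_le (le_min (hx₀.1.trans hx₀.2) (by linarith [hx₀.1]))
      (le_min (by linarith [hx₀.2]) (by linarith))
  have hx_near : ∀ x ∈ Icc p q, |x - x₀| < r := fun x hx => abs_sub_lt_iff.2
    ⟨by linarith [hx.2, min_le_right d₁ (x₀ + r / 2)],
      by linarith [hx.1, le_max_right c₁ (x₀ - r / 2)]⟩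
  refine image2_subset_right inter_subset_left (mem_image2_of_forall_exists_eq hp_le_q
    ((hH.uncurry_left (f := fun (α : ℝ) (q : ℝ × ℝ) => H α q.1 q.2) α hαab).mono
      (Set.prod_mono hpq le_rfl))
    (fun y hy => (hinjx α hαab y hy).mono hpq) (fun x hx => hinjy α hαab x (hpq hx)) hyc
    (fun x hx => hsol α hαab x (hpq hx) h
      (abs_sub_lt_iff.2 ⟨by linarith [hα.2], by linarith [hα.1]⟩) (hx_near x hx)
      (abs_sub_lt_iff.2 ⟨by linarith [hh.2], by linarith [hh.1]⟩))
    (hAx₀ _ (Ioo_mem_nhds (by linarith) (by linarith))) hSpq hB)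

end Family

theorem stmt_11_general (a b c₁ d₁ c₂ d₂ : ℝ) (hab : a < b)
    (H Hx Hy : ℝ → ℝ → ℝ → ℝ)
    (hC1 : ContDiffOn ℝ 1 (fun p : ℝ × ℝ × ℝ => H p.1 p.2.1 p.2.2)
      (Ioo a b ×ˢ Icc c₁ d₁ ×ˢ Icc c₂ d₂))
    (hHx : ∀ α ∈ Ioo a b, ∀ x ∈ Icc c₁ d₁, ∀ y ∈ Icc c₂ d₂,
      HasDerivAt (fun s => H α s y) (Hx α x y) x ∧ Hx α x y ≠ 0)
    (hHy : ∀ α ∈ Ioo a b, ∀ x ∈ Icc c₁ d₁, ∀ y ∈ Icc c₂ d₂,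
      HasDerivAt (fun s => H α x s) (Hy α x y) y ∧ Hy α x y ≠ 0)
    (A B : Set ℝ) (hA : A ⊆ Icc c₁ d₁) (hB : B ⊆ Icc c₂ d₂)
    (hAcat : ¬ IsMeagre A) (hBcat : ¬ IsMeagre B)
    (hBbaire : ∃ E M : Set ℝ, IsOpen E ∧ IsMeagre M ∧ B = symmDiff E M) :
    ∃ a' b', a' < b' ∧ Ioo a' b' ⊆ Ioo a b ∧
      (interior (⋂ α ∈ Ioo a' b',
        {h : ℝ | ∃ x ∈ A, ∃ y ∈ B, H α x y = h})).Nonempty := by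
  obtain ⟨x₀, hx₀A, hAx₀⟩ := exists_mem_closure_forall_nhds_not_isMeagre_inter hAcat
  obtain ⟨y₁, y₂, hy, hyc, hyB⟩ := exists_Icc_subset_Ioo_isMeagre_diff hB hBcat hBbaire
  have hinjx : ∀ α ∈ Ioo a b, ∀ y ∈ Icc c₂ d₂, InjOn (H α · y) (Icc c₁ d₁) :=
    fun α hα y hy => injOn_of_hasDerivAt_ne_zero ordConnected_Icc
      (fun x hx => (hHx α hα x hx y hy).1) (fun x hx => (hHx α hα x hx y hy).2)
  have hinjy : ∀ α ∈ Ioo a b, ∀ x ∈ Icc c₁ d₁, InjOn (H α x) (Icc c₂ d₂) :=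
    fun α hα x hx => injOn_of_hasDerivAt_ne_zero ordConnected_Icc
      (fun y hy => (hHy α hα x hx y hy).1) (fun y hy => (hHy α hα x hx y hy).2)
  obtain ⟨a', b', hab', hsub, h₁, h₂, hh, himage⟩ := exists_forall_Ioo_subset_image2
    hC1.continuousOn hinjx hinjy (α₀ := (a + b) / 2) ⟨by linarith, by linarith⟩
    (closure_minimal hA isClosed_Icc hx₀A) hy hyc hA hAx₀ hyB
  exact ⟨a', b', hab', hsub, (h₁ + h₂) / 2,
    interior_maximal (subset_iInter₂ himage) isOpen_Ioo ⟨by linarith, by linarith⟩⟩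

theorem stmt_11 (a b c₁ d₁ c₂ d₂ : ℝ) (hab : a < b) (h₁ : c₁ ≤ d₁) (h₂ : c₂ ≤ d₂)
    (H Hx Hy : ℝ → ℝ → ℝ → ℝ)
    (hC1 : ContDiffOn ℝ 1 (fun p : ℝ × ℝ × ℝ => H p.1 p.2.1 p.2.2)
      (Ioo a b ×ˢ Icc c₁ d₁ ×ˢ Icc c₂ d₂))
    (hHx : ∀ α ∈ Ioo a b, ∀ x ∈ Icc c₁ d₁, ∀ y ∈ Icc c₂ d₂,
      HasDerivAt (fun s => H α s y) (Hx α x y) x ∧ Hx α x y ≠ 0)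
    (hHy : ∀ α ∈ Ioo a b, ∀ x ∈ Icc c₁ d₁, ∀ y ∈ Icc c₂ d₂,
      HasDerivAt (fun s => H α x s) (Hy α x y) y ∧ Hy α x y ≠ 0)
    (A B : Set ℝ) (hA : A ⊆ Icc c₁ d₁) (hB : B ⊆ Icc c₂ d₂)
    (hAcat : ¬ IsMeagre A) (hBcat : ¬ IsMeagre B)
    (hBbaire : ∃ E M : Set ℝ, IsOpen E ∧ IsMeagre M ∧ B = symmDiff E M) :
    ∃ a' b', a' < b' ∧ Ioo a' b' ⊆ Ioo a b ∧
      (interior (⋂ α ∈ Ioo a' b',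
        {h : ℝ | ∃ x ∈ A, ∃ y ∈ B, H α x y = h})).Nonempty :=
  stmt_11_general a b c₁ d₁ c₂ d₂ hab H Hx Hy hC1 hHx hHy A B hA hB hAcat hBcat hBbaire
end

section
/- (Steinhaus) If A, B ⊆ ℝ are measurable sets of positive Lebesgue measure, then A + B contains a non-empty open interval. -/
open Pointwise

open MeasureTheory

theorem stmt_12 (A B : Set ℝ)
    (hAm : MeasurableSet A) (hBm : MeasurableSet B)
    (hA : 0 < volume A) (hB : 0 < volume B) :
    ∃ a b : ℝ, a < b ∧ Set.Ioo a b ⊆ A + B := by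
  classical
  -- obtain density points
  have hdens : ∀ (S : Set ℝ), MeasurableSet S → 0 < volume S →
      ∃ s ∈ S, Filter.Tendsto
        (fun r => volume (S ∩ Metric.closedBall s r) / volume (Metric.closedBall s r))
        (nhdsWithin 0 (Set.Ioi 0)) (nhds 1) := by
    intro S hSm hS
    have h1 := (Besicovitch.ae_tendsto_measure_inter_div volume S).and
      (ae_restrict_mem hSm)
    have hne : volume.restrict S ≠ 0 := fun h =>
      hS.ne' (by rwa [Measure.restrict_eq_zero] at h)
    haveI : (ae (volume.restrict S)).NeBot := ae_neBot.mpr hne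
    obtain ⟨s, hs1, hs2⟩ := h1.exists
    exact ⟨s, hs2, hs1⟩
  obtain ⟨a, haA, ha⟩ := hdens A hAm hA
  obtain ⟨b, hbB, hb⟩ := hdens B hBm hB
  -- find a common radius r with density > 3/4 for both
  have h34 : ENNReal.ofReal (3/4) < 1 := ENNReal.ofReal_lt_one.mpr (by norm_num)
  have hev : ∀ᶠ r in nhdsWithin (0:ℝ) (Set.Ioi 0),
      ENNReal.ofReal (3/4) < volume (A ∩ Metric.closedBall a r) / volume (Metric.closedBall a r) ∧
      ENNReal.ofReal (3/4) < volume (B ∩ Metric.closedBall b r) / volume (Metric.closedBall b r) ∧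
      0 < r := by
    filter_upwards [ha.eventually (eventually_gt_nhds h34),
      hb.eventually (eventually_gt_nhds h34), self_mem_nhdsWithin] with r h1 h2 h3
    exact ⟨h1, h2, h3⟩
  obtain ⟨r, ⟨hra, hrb, hr⟩⟩ := hev.exists
  -- convert densities to measure lower bounds
  have hcb : ∀ c : ℝ, volume (Metric.closedBall c r) = ENNReal.ofReal (2*r) := fun c =>
    Real.volume_closedBall c r
  have hcbne : (ENNReal.ofReal (2*r)) ≠ 0 := by
    simp only [ne_eq, ENNReal.ofReal_eq_zero, not_le]; linarith
  have hcbtop : (ENNReal.ofReal (2*r)) ≠ ⊤ := ENNReal.ofReal_ne_top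
  have hmul : ENNReal.ofReal (3/4) * ENNReal.ofReal (2*r) = ENNReal.ofReal (3/2*r) := by
    rw [← ENNReal.ofReal_mul (by norm_num)]; ring_nf
  have hAvol : ENNReal.ofReal (3/2*r) < volume (A ∩ Metric.closedBall a r) := by
    rw [hcb] at hra
    rw [← hmul]
    exact (ENNReal.lt_div_iff_mul_lt (Or.inl hcbne) (Or.inl hcbtop)).mp hra
  have hBvol : ENNReal.ofReal (3/2*r) < volume (B ∩ Metric.closedBall b r) := by
    rw [hcb] at hrb
    rw [← hmul]
    exact (ENNReal.lt_div_iff_mul_lt (Or.inl hcbne) (Or.inl hcbtop)).mp hrb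
  refine ⟨a + b - r/2, a + b + r/2, by linarith, ?_⟩
  intro x hx
  obtain ⟨hx1, hx2⟩ := hx
  -- consider S = A ∩ cb a r and T = preimage of (B ∩ cb b r) under t ↦ x - t
  set S := A ∩ Metric.closedBall a r with hS
  set T := (fun t => x - t) ⁻¹' (B ∩ Metric.closedBall b r) with hT
  have hTm : MeasurableSet T := (hBm.inter measurableSet_closedBall).preimage (by fun_prop)
  have hTvol : volume T = volume (B ∩ Metric.closedBall b r) :=
    (Measure.measurePreserving_sub_left volume x).measure_preimage
      ((hBm.inter measurableSet_closedBall).nullMeasurableSet)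
  have hSsub : S ⊆ Metric.closedBall a (3/2*r) := by
    intro y hy
    have h2 : |y - a| ≤ r := by
      have := hy.2
      rwa [Metric.mem_closedBall, Real.dist_eq] at this
    rw [Metric.mem_closedBall, Real.dist_eq, abs_le]
    have h3 := abs_le.mp h2
    constructor <;> linarith [h3.1, h3.2]
  have hTsub : T ⊆ Metric.closedBall a (3/2*r) := by
    intro y hy
    have h2 : |x - (b + y)| ≤ r := by
      have := hy.2
      simpa [Real.dist_eq] using this
    rw [Metric.mem_closedBall, Real.dist_eq, abs_le]
    have h3 := abs_le.mp h2
    constructor <;> linarith [h3.1, h3.2]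
  -- S and T cannot be disjoint
  have hST : ¬ Disjoint S T := by
    intro hd
    have hunion : volume (S ∪ T) = volume S + volume T := measure_union hd hTm
    have hle : volume (S ∪ T) ≤ ENNReal.ofReal (2 * (3/2*r)) := by
      rw [← Real.volume_closedBall a (3/2*r)]
      exact measure_mono (Set.union_subset hSsub hTsub)
    have hgt : ENNReal.ofReal (2 * (3/2*r)) < volume S + volume T := by
      have h1 : ENNReal.ofReal (3/2*r) + ENNReal.ofReal (3/2*r)
          = ENNReal.ofReal (2 * (3/2*r)) := by
        rw [← ENNReal.ofReal_add (by linarith) (by linarith)]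
        ring_nf
      rw [← h1]
      exact ENNReal.add_lt_add hAvol (hTvol ▸ hBvol)
    rw [hunion] at hle
    exact absurd hle (not_le.mpr hgt)
  obtain ⟨y, hyS, hyT⟩ := Set.not_disjoint_iff.mp hST
  exact ⟨y, hyS.1, x - y, hyT.1, by ring⟩
end

section
/- (Piccard) If A, B ⊆ ℝ are sets of second Baire category having the Baire property, then A + B contains a non-empty open interval. -/
open Pointwise

lemma piccard_aux {A : Set ℝ} (hcat : ¬ IsMeagre A)
    (hb : ∃ E M : Set ℝ, IsOpen E ∧ IsMeagre M ∧ A = symmDiff E M) :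
    ∃ a₁ a₂ : ℝ, a₁ < a₂ ∧ IsMeagre (Set.Ioo a₁ a₂ \ A) := by
  obtain ⟨E, M, hE, hM, rfl⟩ := hb
  have hEne : E.Nonempty := by
    rcases E.eq_empty_or_nonempty with h | h
    · exact absurd (by simpa [h, Set.symmDiff_def] using hM) hcat
    · exact h
  obtain ⟨p, hp⟩ := hEne
  obtain ⟨ε, hε, hball⟩ := Metric.isOpen_iff.mp hE p hp
  refine ⟨p - ε, p + ε, by linarith, hM.mono ?_⟩
  intro x hx
  have hxE : x ∈ E := hball (by rw [Real.ball_eq_Ioo]; exact hx.1)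
  have hxA : x ∉ symmDiff E M := hx.2
  rw [symmDiff_def] at hxA
  simp only [Set.sup_eq_union, Set.mem_union, Set.mem_diff] at hxA
  push_neg at hxA
  exact hxA.1 hxE

theorem stmt_13 (A B : Set ℝ)
    (hAcat : ¬ IsMeagre A) (hBcat : ¬ IsMeagre B)
    (hAbaire : ∃ E M : Set ℝ, IsOpen E ∧ IsMeagre M ∧ A = symmDiff E M)
    (hBbaire : ∃ E M : Set ℝ, IsOpen E ∧ IsMeagre M ∧ B = symmDiff E M) :
    ∃ a b : ℝ, a < b ∧ Set.Ioo a b ⊆ A + B := by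
  obtain ⟨a₁, a₂, ha, hA⟩ := piccard_aux hAcat hAbaire
  obtain ⟨b₁, b₂, hb, hB⟩ := piccard_aux hBcat hBbaire
  refine ⟨a₁ + b₁, a₂ + b₂, by linarith, ?_⟩
  intro c hc
  obtain ⟨hc1, hc2⟩ := hc
  -- the map y ↦ c - y
  set f : ℝ → ℝ := fun y => c - y with hf
  have hfhomeo : IsOpenMap f := by
    have : f = (Homeomorph.addLeft c) ∘ (Homeomorph.neg ℝ) := by
      ext y; simp [hf, sub_eq_add_neg]
    rw [this]
    exact (Homeomorph.addLeft c).isOpenMap.comp (Homeomorph.neg ℝ).isOpenMap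
  have hfcont : Continuous f := continuous_const.sub continuous_id
  have hBpre : IsMeagre (f ⁻¹' (Set.Ioo b₁ b₂ \ B)) :=
    hB.preimage_of_isOpenMap hfcont hfhomeo
  -- bad set
  set S : Set ℝ := (Set.Ioo a₁ a₂ \ A) ∪ f ⁻¹' (Set.Ioo b₁ b₂ \ B) with hS
  have hSm : IsMeagre S := by
    rw [IsMeagre, hS, Set.compl_union]
    exact Filter.inter_mem hA hBpre
  have hdense : Dense Sᶜ := dense_of_mem_residual hSm
  -- the open set K
  set K : Set ℝ := Set.Ioo a₁ a₂ ∩ Set.Ioo (c - b₂) (c - b₁) with hK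
  have hKopen : IsOpen K := isOpen_Ioo.inter isOpen_Ioo
  have hKne : K.Nonempty := by
    have h1 : max a₁ (c - b₂) < min a₂ (c - b₁) := by
      simp only [lt_min_iff, max_lt_iff]
      refine ⟨⟨by linarith, by linarith⟩, by linarith, by linarith⟩
    obtain ⟨m, hm1, hm2⟩ := exists_between h1
    exact ⟨m, ⟨(le_max_left _ _).trans_lt hm1, hm2.trans_le (min_le_left _ _)⟩,
      (le_max_right _ _).trans_lt hm1, hm2.trans_le (min_le_right _ _)⟩
  obtain ⟨y, hyS, hyK⟩ := hdense.exists_mem_open hKopen hKne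
  have hyA : y ∈ A := by
    by_contra h
    exact hyS (Or.inl ⟨hyK.1, h⟩)
  have hyB : c - y ∈ B := by
    by_contra h
    refine hyS (Or.inr ⟨?_, h⟩)
    obtain ⟨h1, h2⟩ := hyK.2
    simp only [hf, Set.mem_Ioo]
    constructor <;> linarith
  rw [Set.mem_add]
  exact ⟨y, hyA, c - y, hyB, by ring⟩
end

section
/- Let C = C_{1/3} × C_{1/3} be the product of the middle-third Cantor set with itself. For every t ∈ C, the pinned distance set Δ_t(C) = {‖c - t‖₂ : c ∈ C} has non-empty interior. -/
/-!
Flipping the first two ternary digits of `t 0` and the first ternary digit of `t 1`, and letting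
all later digits vary, `9 |c 0 - t 0|` and `9 |c 1 - t 1|` run over `P + C` and `Q + C` with
`P ∈ [7, 8] ∪ [3, 4]` (from `|2/3 ± 2/9| ∈ {8/9, 4/9}`) and `Q ∈ [5, 6]`. So it suffices that
`(P + C)² + (Q + C)²` contains `[P² + Q², (P + 1)² + (Q + 1)²]` whenever `Q + 1 ≤ P ≤ 3Q - 1`.
As `C = C/3 ∪ (2 + C)/3`, that set contains `1/9` times the sets for `(3P + i, 3Q + j)`,
`i, j ∈ {0, 2}`; these parameters satisfy the same inequalities, and their intervals cover the
interval for `(P, Q)`. Iterating, every point of the interval is within `O(3⁻ᵐ)` of the set,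
which is closed.
-/

def cantorMT : Set ℝ :=
  {x | ∃ a : ℕ → ℕ, (∀ k, a k = 0 ∨ a k = 1) ∧
    x = (2 / 3) * ∑' k : ℕ, (a k : ℝ) / 3 ^ k}

open Set Filter Topology

lemma ofDigits_eq_two_thirds_tsum {d : ℕ → Fin 3} {a : ℕ → ℕ} (h : ∀ k, (d k : ℝ) = 2 * a k) :
    Real.ofDigits d = 2 / 3 * ∑' k, (a k : ℝ) / 3 ^ k := by
  rw [Real.ofDigits, ← tsum_mul_left]
  congr 1 with k
  rw [Real.ofDigitsTerm, h k]
  push_cast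
  field_simp
  ring

lemma cantorMT_eq_cantorSet : cantorMT = cantorSet := by
  ext x
  rw [cantorSet_eq_zero_two_ofDigits]
  constructor
  · rintro ⟨a, ha, rfl⟩
    refine ⟨fun k => if a k = 0 then 0 else 2, fun k => by dsimp only; split_ifs <;> decide,
      ofDigits_eq_two_thirds_tsum fun k => ?_⟩
    rcases ha k with h | h <;> simp [h]
  · rintro ⟨d, hd, rfl⟩
    have hd' (k : ℕ) : d k = 0 ∨ d k = 2 := by have := hd k; omega
    refine ⟨fun k => (d k : ℕ) / 2, fun k => ?_, ofDigits_eq_two_thirds_tsum fun k => ?_⟩ <;>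
      rcases hd' k with h | h <;> simp [h]

lemma one_sub_mem_preCantorSet {x : ℝ} {n : ℕ} (hx : x ∈ preCantorSet n) :
    1 - x ∈ preCantorSet n := by
  induction n generalizing x with
  | zero =>
    obtain ⟨h₀, h₁⟩ := hx
    exact ⟨by linarith, by linarith⟩
  | succ n ih =>
    rcases hx with ⟨y, hy, rfl⟩ | ⟨y, hy, rfl⟩
    · exact Or.inr ⟨1 - y, ih hy, by ring⟩
    · exact Or.inl ⟨1 - y, ih hy, by ring⟩

lemma one_sub_mem_cantorSet {x : ℝ} (hx : x ∈ cantorSet) : 1 - x ∈ cantorSet :=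
  mem_iInter.mpr fun n => one_sub_mem_preCantorSet (mem_iInter.mp hx n)

lemma add_div_three_mem_cantorSet {i e : ℝ} (hi : i = 0 ∨ i = 2) (he : e ∈ cantorSet) :
    (i + e) / 3 ∈ cantorSet := by
  rw [cantorSet_eq_union_halves]
  rcases hi with rfl | rfl
  · exact Or.inl ⟨e, he, by ring⟩
  · exact Or.inr ⟨e, he, rfl⟩

lemma exists_eq_add_div_three_of_mem_cantorSet {t : ℝ} (ht : t ∈ cantorSet) :
    ∃ i : ℝ, (i = 0 ∨ i = 2) ∧ ∃ y ∈ cantorSet, t = (i + y) / 3 := by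
  rw [cantorSet_eq_union_halves] at ht
  rcases ht with ⟨y, hy, rfl⟩ | ⟨y, hy, rfl⟩
  · exact ⟨0, Or.inl rfl, y, hy, by ring⟩
  · exact ⟨2, Or.inr rfl, y, hy, rfl⟩

def cantorSqSum (P Q : ℝ) : Set ℝ :=
  (fun e : ℝ × ℝ => (P + e.1) ^ 2 + (Q + e.2) ^ 2) '' cantorSet ×ˢ cantorSet

lemma isClosed_cantorSqSum (P Q : ℝ) : IsClosed (cantorSqSum P Q) :=
  ((isCompact_cantorSet.prod isCompact_cantorSet).image (by fun_prop)).isClosed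

lemma cantorSqSum_comm (P Q : ℝ) : cantorSqSum P Q = cantorSqSum Q P := by
  ext r
  constructor <;> rintro ⟨⟨e, e'⟩, ⟨he, he'⟩, rfl⟩ <;> exact ⟨(e', e), ⟨he', he⟩, add_comm _ _⟩

lemma div_nine_mem_cantorSqSum {P Q i j g : ℝ} (hi : i = 0 ∨ i = 2) (hj : j = 0 ∨ j = 2)
    (hg : g ∈ cantorSqSum (3 * P + i) (3 * Q + j)) : g / 9 ∈ cantorSqSum P Q := by
  obtain ⟨⟨e, e'⟩, ⟨he, he'⟩, rfl⟩ := hg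
  exact ⟨((i + e) / 3, (j + e') / 3),
    ⟨add_div_three_mem_cantorSet hi he, add_div_three_mem_cantorSet hj he'⟩, by ring⟩

section SqSum

variable {P Q : ℝ}

/- Rescaled by 3, the four corner squares of side `1/3` in `[P, P + 1] × [Q, Q + 1]` have
image intervals that overlap in the order `(0, 0), (0, 2), (2, 0), (2, 2)` since
`Q + 1/3 ≤ P ≤ 3Q + 1`. -/
lemma exists_corner_mem_Icc (hQP : Q + 1 ≤ P) (hPQ : P + 1 ≤ 3 * Q) {r : ℝ}
    (hr : r ∈ Icc (P ^ 2 + Q ^ 2) ((P + 1) ^ 2 + (Q + 1) ^ 2)) :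
    ∃ i j : ℝ, (i = 0 ∨ i = 2) ∧ (j = 0 ∨ j = 2) ∧
      9 * r ∈ Icc ((3 * P + i) ^ 2 + (3 * Q + j) ^ 2)
        ((3 * P + i + 1) ^ 2 + (3 * Q + j + 1) ^ 2) := by
  obtain ⟨hlo, hhi⟩ := hr
  by_cases h₀₀ : 9 * r ≤ (3 * P + 1) ^ 2 + (3 * Q + 1) ^ 2
  · exact ⟨0, 0, Or.inl rfl, Or.inl rfl, by constructor <;> linarith⟩
  by_cases h₀₂ : 9 * r ≤ (3 * P + 1) ^ 2 + (3 * Q + 3) ^ 2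
  · exact ⟨0, 2, Or.inl rfl, Or.inr rfl, by constructor <;> linarith⟩
  by_cases h₂₀ : 9 * r ≤ (3 * P + 3) ^ 2 + (3 * Q + 1) ^ 2
  · exact ⟨2, 0, Or.inr rfl, Or.inl rfl, by constructor <;> linarith⟩
  · exact ⟨2, 2, Or.inr rfl, Or.inr rfl, by constructor <;> linarith⟩

lemma exists_mem_cantorSqSum_abs_sub_le (m : ℕ) (hQP : Q + 1 ≤ P) (hPQ : P + 1 ≤ 3 * Q) {r : ℝ}
    (hr : r ∈ Icc (P ^ 2 + Q ^ 2) ((P + 1) ^ 2 + (Q + 1) ^ 2)) :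
    ∃ g ∈ cantorSqSum P Q, |r - g| ≤ (2 * P + 2 * Q + 4) / 3 ^ m := by
  induction m generalizing P Q r with
  | zero =>
    refine ⟨P ^ 2 + Q ^ 2, ⟨(0, 0), ⟨zero_mem_cantorSet, zero_mem_cantorSet⟩, by ring⟩, ?_⟩
    rw [abs_of_nonneg (by linarith [hr.1])]
    linarith [hr.2]
  | succ m ih =>
    obtain ⟨i, j, hi, hj, hr'⟩ := exists_corner_mem_Icc hQP hPQ hr
    have hi₂ : 0 ≤ i ∧ i ≤ 2 := by rcases hi with rfl | rfl <;> norm_num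
    have hj₂ : 0 ≤ j ∧ j ≤ 2 := by rcases hj with rfl | rfl <;> norm_num
    obtain ⟨g, hg, hrg⟩ := ih (P := 3 * P + i) (Q := 3 * Q + j) (by linarith) (by linarith)
      (by simpa using hr')
    refine ⟨g / 9, div_nine_mem_cantorSqSum hi hj hg, ?_⟩
    calc |r - g / 9| = |9 * r - g| / 9 := by
          rw [show r - g / 9 = (9 * r - g) / 9 by ring, abs_div,
            abs_of_pos (by norm_num : (0 : ℝ) < 9)]
      _ ≤ (2 * (3 * P + i) + 2 * (3 * Q + j) + 4) / 3 ^ m / 9 := by gcongr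
      _ ≤ (2 * P + 2 * Q + 4) / 3 ^ (m + 1) := by
          rw [div_div, pow_succ, div_le_div_iff₀ (by positivity) (by positivity)]
          nlinarith [pow_pos (by norm_num : (0 : ℝ) < 3) m]

lemma Icc_subset_cantorSqSum (hQP : Q + 1 ≤ P) (hPQ : P + 1 ≤ 3 * Q) :
    Icc (P ^ 2 + Q ^ 2) ((P + 1) ^ 2 + (Q + 1) ^ 2) ⊆ cantorSqSum P Q := by
  intro r hr
  rw [← (isClosed_cantorSqSum P Q).closure_eq]
  choose g hg hrg using fun m => exists_mem_cantorSqSum_abs_sub_le m hQP hPQ hr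
  refine mem_closure_of_tendsto (b := atTop) (tendsto_iff_dist_tendsto_zero.mpr ?_)
    (Eventually.of_forall hg)
  refine squeeze_zero (g := fun m : ℕ => (2 * P + 2 * Q + 4) / 3 ^ m) (fun _ => dist_nonneg)
    (fun m => ?_)
    (tendsto_const_nhds.div_atTop (tendsto_pow_atTop_atTop_of_one_lt (by norm_num : (1 : ℝ) < 3)))
  rw [Real.dist_eq, abs_sub_comm]
  exact hrg m

end SqSum

lemma exists_sub_eq_keep_first_digit {t : ℝ} (ht : t ∈ cantorSet) :
    ∃ y ∈ cantorSet, ∀ c' ∈ cantorSet, ∃ c ∈ cantorSet, c - t = (c' - y) / 3 := by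
  obtain ⟨i, hi, y, hy, rfl⟩ := exists_eq_add_div_three_of_mem_cantorSet ht
  exact ⟨y, hy, fun c' hc' => ⟨(i + c') / 3, add_div_three_mem_cantorSet hi hc', by ring⟩⟩

lemma exists_sub_eq_flip_first_digit {t : ℝ} (ht : t ∈ cantorSet) :
    ∃ y ∈ cantorSet, ∃ σ : ℝ, (σ = 1 ∨ σ = -1) ∧
      ∀ c' ∈ cantorSet, ∃ c ∈ cantorSet, c - t = σ * (2 + c' - y) / 3 := by
  obtain ⟨i, hi | hi, y, hy, rfl⟩ := exists_eq_add_div_three_of_mem_cantorSet ht <;> subst hi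
  · exact ⟨y, hy, 1, Or.inl rfl, fun c' hc' =>
      ⟨(2 + c') / 3, add_div_three_mem_cantorSet (Or.inr rfl) hc', by ring⟩⟩
  · exact ⟨1 - y, one_sub_mem_cantorSet hy, -1, Or.inr rfl, fun c' hc' =>
      ⟨(0 + (1 - c')) / 3, add_div_three_mem_cantorSet (Or.inl rfl) (one_sub_mem_cantorSet hc'),
        by ring⟩⟩

lemma abs_eq_of_eq_sign_mul {x a σ : ℝ} (hσ : σ = 1 ∨ σ = -1) (ha : 0 ≤ a) (h : x = σ * a) :
    |x| = a := by
  rcases hσ with rfl | rfl <;> simp [h, abs_of_nonneg ha]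

lemma exists_abs_sub_eq_flip_two_digits {t : ℝ} (ht : t ∈ cantorSet) :
    ∃ P : ℝ, (7 ≤ P ∧ P ≤ 8 ∨ 3 ≤ P ∧ P ≤ 4) ∧
      ∀ e ∈ cantorSet, ∃ c ∈ cantorSet, |c - t| = (P + e) / 9 := by
  obtain ⟨y, hy, σ, hσ, hflip⟩ := exists_sub_eq_flip_first_digit ht
  obtain ⟨y₂, hy₂, σ₂, rfl | rfl, hflip₂⟩ := exists_sub_eq_flip_first_digit hy
  all_goals obtain ⟨hy₂₀, hy₂₁⟩ := cantorSet_subset_unitInterval hy₂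
  · refine ⟨8 - y₂, Or.inl ⟨by linarith, by linarith⟩, fun e he => ?_⟩
    obtain ⟨c', hc', hc'y⟩ := hflip₂ e he
    obtain ⟨c, hc, hct⟩ := hflip c' hc'
    obtain ⟨he₀, -⟩ := cantorSet_subset_unitInterval he
    exact ⟨c, hc, abs_eq_of_eq_sign_mul hσ (by linarith) (by linear_combination hct + σ / 3 * hc'y)⟩
  · refine ⟨3 + y₂, Or.inr ⟨by linarith, by linarith⟩, fun e he => ?_⟩
    obtain ⟨c', hc', hc'y⟩ := hflip₂ (1 - e) (one_sub_mem_cantorSet he)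
    obtain ⟨c, hc, hct⟩ := hflip c' hc'
    obtain ⟨he₀, -⟩ := cantorSet_subset_unitInterval he
    exact ⟨c, hc, abs_eq_of_eq_sign_mul hσ (by linarith) (by linear_combination hct + σ / 3 * hc'y)⟩

lemma exists_abs_sub_eq_flip_one_digit {t : ℝ} (ht : t ∈ cantorSet) :
    ∃ Q : ℝ, 5 ≤ Q ∧ Q ≤ 6 ∧ ∀ e ∈ cantorSet, ∃ c ∈ cantorSet, |c - t| = (Q + e) / 9 := by
  obtain ⟨y, hy, σ, hσ, hflip⟩ := exists_sub_eq_flip_first_digit ht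
  obtain ⟨y₂, hy₂, hkeep⟩ := exists_sub_eq_keep_first_digit hy
  obtain ⟨hy₂₀, hy₂₁⟩ := cantorSet_subset_unitInterval hy₂
  refine ⟨6 - y₂, by linarith, by linarith, fun e he => ?_⟩
  obtain ⟨c', hc', hc'y⟩ := hkeep e he
  obtain ⟨c, hc, hct⟩ := hflip c' hc'
  obtain ⟨he₀, -⟩ := cantorSet_subset_unitInterval he
  exact ⟨c, hc, abs_eq_of_eq_sign_mul hσ (by linarith) (by linear_combination hct + σ / 3 * hc'y)⟩

lemma EuclideanSpace.dist_eq_sqrt_fin_two (c t : EuclideanSpace ℝ (Fin 2)) :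
    dist c t = √((c 0 - t 0) ^ 2 + (c 1 - t 1) ^ 2) := by
  simp [EuclideanSpace.dist_eq, Fin.sum_univ_two, Real.dist_eq, sq_abs]

lemma sqrt_div_nine_mem_pinned {t : EuclideanSpace ℝ (Fin 2)} {P Q r : ℝ}
    (hP : ∀ e ∈ cantorSet, ∃ c ∈ cantorSet, |c - t 0| = (P + e) / 9)
    (hQ : ∀ e ∈ cantorSet, ∃ c ∈ cantorSet, |c - t 1| = (Q + e) / 9)
    (hr : r ∈ cantorSqSum P Q) :
    √r / 9 ∈ {d : ℝ | ∃ c : EuclideanSpace ℝ (Fin 2),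
      (c 0 ∈ cantorSet ∧ c 1 ∈ cantorSet) ∧ dist c t = d} := by
  obtain ⟨⟨e, e'⟩, ⟨he, he'⟩, rfl⟩ := hr
  obtain ⟨c₀, hc₀, hc₀t⟩ := hP e he
  obtain ⟨c₁, hc₁, hc₁t⟩ := hQ e' he'
  refine ⟨!₂[c₀, c₁], ⟨hc₀, hc₁⟩, ?_⟩
  rw [EuclideanSpace.dist_eq_sqrt_fin_two, ← sq_abs, ← sq_abs (_ - t 1)]
  simp only [Matrix.cons_val_zero, Matrix.cons_val_one]
  rw [hc₀t, hc₁t, div_pow, div_pow, ← add_div, Real.sqrt_div' _ (by norm_num : (0 : ℝ) ≤ 9 ^ 2),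
    Real.sqrt_sq (by norm_num)]

theorem stmt_15 (t : EuclideanSpace ℝ (Fin 2))
    (ht : t 0 ∈ cantorMT ∧ t 1 ∈ cantorMT) :
    (interior {d : ℝ | ∃ c : EuclideanSpace ℝ (Fin 2),
      (c 0 ∈ cantorMT ∧ c 1 ∈ cantorMT) ∧ dist c t = d}).Nonempty := by
  rw [cantorMT_eq_cantorSet] at ht ⊢
  obtain ⟨P, hP, hPt⟩ := exists_abs_sub_eq_flip_two_digits ht.1
  obtain ⟨Q, hQ₅, hQ₆, hQt⟩ := exists_abs_sub_eq_flip_one_digit ht.2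
  have hPQ : Icc (P ^ 2 + Q ^ 2) ((P + 1) ^ 2 + (Q + 1) ^ 2) ⊆ cantorSqSum P Q := by
    rcases hP with ⟨hP₇, hP₈⟩ | ⟨hP₃, hP₄⟩
    · exact Icc_subset_cantorSqSum (by linarith) (by linarith)
    · rw [cantorSqSum_comm, add_comm (P ^ 2), add_comm ((P + 1) ^ 2)]
      exact Icc_subset_cantorSqSum (by linarith) (by linarith)
  have hP₀ : 0 ≤ P := by rcases hP with h | h <;> linarith
  have hlt : √(P ^ 2 + Q ^ 2) / 9 < √((P + 1) ^ 2 + (Q + 1) ^ 2) / 9 := by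
    gcongr <;> linarith
  refine (nonempty_Ioo.mpr hlt).mono (interior_maximal (fun d hd => ?_) isOpen_Ioo)
  obtain ⟨hd₁, hd₂⟩ := hd
  have hd₀ : 0 ≤ d := le_trans (by positivity) hd₁.le
  rw [show d = √((9 * d) ^ 2) / 9 by rw [Real.sqrt_sq (by positivity)]; ring]
  refine sqrt_div_nine_mem_pinned hPt hQt (hPQ ⟨?_, ?_⟩)
  · exact (Real.sqrt_le_left (by positivity)).mp (by linarith)
  · exact (Real.le_sqrt (by positivity) (by positivity)).mp (by linarith)
end

section
/- The set C(1/3) + S¹ has non-empty interior, where C(1/3) = C_{1/3} × C_{1/3} is the product of the middle-third Cantor set with itself and S¹ is the Euclidean unit circle in ℝ². -/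
open Pointwise

/-!
Near `(x, y) = (9/10, 23/50)` the function `F (s, t) = (x - s / 81) ^ 2 + (y - t / 81) ^ 2` is
decreasing on `[0, 1]²` in both variables, with partial derivatives in ratio between `1` and `3`,
much like `-(s + λ t)` with `λ ∈ [1/3, 1]`, for which `C + λ C` is an interval. So if the level `1`
lies between the values of `F` at the two extreme corners of a Cantor square, it does so for one of
its four Cantor subsquares as well. The nested squares shrink to `(s, t) ∈ C × C` with
`F (s, t) = 1`, and `C / 81 ⊆ C`; as the conditions on `(x, y)` are open, this puts a whole
neighbourhood of `(9/10, 23/50)` inside `C × C + S¹`.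
-/

open Filter Topology Function

namespace CantorCircle

lemma summable_digits_div_three_pow {a : ℕ → ℕ} (ha : ∀ k, a k ≤ 1) :
    Summable (fun k => (a k : ℝ) / 3 ^ k) := by
  refine Summable.of_nonneg_of_le (fun k => by positivity) (fun k => ?_)
    (summable_geometric_of_lt_one (by norm_num) (by norm_num : (1 : ℝ) / 3 < 1))
  rw [one_div_pow]
  gcongr
  exact_mod_cast ha k

lemma div_three_mem_cantorMT {s : ℝ} (hs : s ∈ cantorMT) : s / 3 ∈ cantorMT := by
  obtain ⟨a, ha, rfl⟩ := hs
  let b : ℕ → ℕ := fun k => if k = 0 then 0 else a (k - 1)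
  have hb : ∀ k, b k = 0 ∨ b k = 1 := fun k => by
    by_cases hk : k = 0 <;> simp [b, hk, ha (k - 1)]
  refine ⟨b, hb, ?_⟩
  have hsum := summable_digits_div_three_pow fun k => Nat.le_one_iff_eq_zero_or_eq_one.2 (hb k)
  rw [hsum.tsum_eq_zero_add]
  simp only [b, Nat.add_one_ne_zero, if_true, if_false, Nat.add_sub_cancel, pow_succ,
    CharP.cast_eq_zero, zero_div, zero_add, ← div_div, tsum_div_const]
  ring

lemma div_81_mem_cantorMT {s : ℝ} (hs : s ∈ cantorMT) : s / 81 ∈ cantorMT := by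
  have := div_three_mem_cantorMT (div_three_mem_cantorMT (div_three_mem_cantorMT
    (div_three_mem_cantorMT hs)))
  convert this using 1
  ring

lemma tendsto_cantor_partialSum {a : ℕ → ℕ} (ha : ∀ k, a k ≤ 1) :
    Tendsto (fun n => (2 / 3) * ∑ k ∈ Finset.range n, (a k : ℝ) / 3 ^ k) atTop
      (𝓝 ((2 / 3) * ∑' k, (a k : ℝ) / 3 ^ k)) :=
  (summable_digits_div_three_pow ha).hasSum.tendsto_sum_nat.const_mul _

section NestedSquares

variable (f : ℝ → ℝ → ℝ) (c : ℝ)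

/-- Meant for `f` decreasing in both variables, when it says that `c` lies between the values of `f`
at the extreme corners of the square `[u, u + e] × [v, v + e]`. -/
def Brackets (u v e : ℝ) : Prop := f (u + e) (v + e) ≤ c ∧ c ≤ f u v

def CantorRefinable : Prop :=
  ∀ u v h : ℝ, 0 ≤ h → 0 ≤ u → u + 3 * h ≤ 1 → 0 ≤ v → v + 3 * h ≤ 1 →
    Brackets f c u v (3 * h) →
    ∃ i j : ℕ, i ≤ 1 ∧ j ≤ 1 ∧ Brackets f c (u + 2 * i * h) (v + 2 * j * h) h

variable {f c}

/-- Greedy choice among the four Cantor subsquares, tried in the order `00, 01, 10, 11`: each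
failure of the upper bracket at one subsquare gives the lower bracket at the next one. -/
lemma Brackets.exists_child {u v h : ℝ} (hb : Brackets f c u v (3 * h))
    (h01 : f (u + h) (v + h) ≤ f u (v + 2 * h))
    (h10 : f (u + h) (v + 3 * h) ≤ f (u + 2 * h) v)
    (h11 : f (u + 3 * h) (v + h) ≤ f (u + 2 * h) (v + 2 * h)) :
    ∃ i j : ℕ, i ≤ 1 ∧ j ≤ 1 ∧ Brackets f c (u + 2 * i * h) (v + 2 * j * h) h := by
  obtain ⟨hup, hlow⟩ := hb
  by_cases c00 : f (u + h) (v + h) ≤ c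
  · exact ⟨0, 0, zero_le_one, zero_le_one, by simpa using c00, by simpa using hlow⟩
  have low01 : c ≤ f u (v + 2 * h) := (le_of_not_ge c00).trans h01
  by_cases c01 : f (u + h) (v + 3 * h) ≤ c
  · refine ⟨0, 1, zero_le_one, le_rfl, ?_, ?_⟩
    · convert c01 using 2 <;> push_cast <;> ring
    · convert low01 using 2 <;> push_cast <;> ring
  have low10 : c ≤ f (u + 2 * h) v := (le_of_not_ge c01).trans h10
  by_cases c10 : f (u + 3 * h) (v + h) ≤ c
  · refine ⟨1, 0, le_rfl, zero_le_one, ?_, ?_⟩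
    · convert c10 using 2 <;> push_cast <;> ring
    · convert low10 using 2 <;> push_cast <;> ring
  have low11 : c ≤ f (u + 2 * h) (v + 2 * h) := (le_of_not_ge c10).trans h11
  refine ⟨1, 1, le_rfl, le_rfl, ?_, ?_⟩
  · convert hup using 2 <;> push_cast <;> ring
  · convert low11 using 2 <;> push_cast <;> ring

/-- The digit rule `g` is fed the current corner and the side `(1 / 3) ^ (n + 1)` of the next
square. -/
noncomputable def nestedCorner (g : ℝ → ℝ → ℝ → ℕ × ℕ) : ℕ → ℝ × ℝ
  | 0 => (0, 0)
  | n + 1 =>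
    let p := nestedCorner g n
    let d := g p.1 p.2 ((1 / 3) ^ (n + 1))
    (p.1 + 2 * d.1 * (1 / 3) ^ (n + 1), p.2 + 2 * d.2 * (1 / 3) ^ (n + 1))

noncomputable def nestedDigit (g : ℝ → ℝ → ℝ → ℕ × ℕ) (n : ℕ) : ℕ × ℕ :=
  g (nestedCorner g n).1 (nestedCorner g n).2 ((1 / 3) ^ (n + 1))

lemma nestedCorner_eq_partialSum (g : ℝ → ℝ → ℝ → ℕ × ℕ) (n : ℕ) :
    (nestedCorner g n).1 = (2 / 3) * ∑ k ∈ Finset.range n, ((nestedDigit g k).1 : ℝ) / 3 ^ k ∧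
    (nestedCorner g n).2 = (2 / 3) * ∑ k ∈ Finset.range n, ((nestedDigit g k).2 : ℝ) / 3 ^ k := by
  induction n with
  | zero => simp [nestedCorner]
  | succ n ih =>
    have hsucc : nestedCorner g (n + 1) = ((nestedCorner g n).1 +
        2 * (nestedDigit g n).1 * (1 / 3) ^ (n + 1), (nestedCorner g n).2 +
        2 * (nestedDigit g n).2 * (1 / 3) ^ (n + 1)) := rfl
    rw [hsucc, Finset.sum_range_succ, Finset.sum_range_succ, ih.1, ih.2]
    constructor <;> rw [one_div_pow] <;> ring

lemma exists_digits_brackets (hrefine : CantorRefinable f c) (h0 : Brackets f c 0 0 1) :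
    ∃ a b : ℕ → ℕ, (∀ k, a k ≤ 1) ∧ (∀ k, b k ≤ 1) ∧ ∀ n, Brackets f c
      ((2 / 3) * ∑ k ∈ Finset.range n, (a k : ℝ) / 3 ^ k)
      ((2 / 3) * ∑ k ∈ Finset.range n, (b k : ℝ) / 3 ^ k) ((1 / 3) ^ n) := by
  choose! i j hi hj hchild using hrefine
  set g : ℝ → ℝ → ℝ → ℕ × ℕ := fun u v h => (i u v h, j u v h)
  set p := nestedCorner g
  have hside (n : ℕ) : ((1 : ℝ) / 3) ^ n = 3 * (1 / 3) ^ (n + 1) := by ring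
  have hinv (n : ℕ) : 0 ≤ (p n).1 ∧ (p n).1 + 3 * (1 / 3) ^ (n + 1) ≤ 1 ∧ 0 ≤ (p n).2 ∧
      (p n).2 + 3 * (1 / 3) ^ (n + 1) ≤ 1 ∧
      Brackets f c (p n).1 (p n).2 (3 * (1 / 3) ^ (n + 1)) := by
    induction n with
    | zero => norm_num [p, nestedCorner, h0]
    | succ n ih =>
      obtain ⟨hu0, hu1, hv0, hv1, hb⟩ := ih
      set h : ℝ := (1 / 3) ^ (n + 1)
      have hh : 0 ≤ h := by positivity
      have hi1 : (i (p n).1 (p n).2 h : ℝ) ≤ 1 := by exact_mod_cast hi _ _ _ hh hu0 hu1 hv0 hv1 hb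
      have hj1 : (j (p n).1 (p n).2 h : ℝ) ≤ 1 := by exact_mod_cast hj _ _ _ hh hu0 hu1 hv0 hv1 hb
      rw [← hside]
      refine ⟨?_, ?_, ?_, ?_, hchild _ _ _ hh hu0 hu1 hv0 hv1 hb⟩ <;>
        simp only [p, nestedCorner, g] <;> nlinarith
  have hdigit (k : ℕ) : (nestedDigit g k).1 ≤ 1 ∧ (nestedDigit g k).2 ≤ 1 := by
    obtain ⟨hu0, hu1, hv0, hv1, hb⟩ := hinv k
    have hh : (0 : ℝ) ≤ (1 / 3) ^ (k + 1) := by positivity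
    exact ⟨hi _ _ _ hh hu0 hu1 hv0 hv1 hb, hj _ _ _ hh hu0 hu1 hv0 hv1 hb⟩
  refine ⟨fun k => (nestedDigit g k).1, fun k => (nestedDigit g k).2, fun k => (hdigit k).1,
    fun k => (hdigit k).2, fun n => ?_⟩
  rw [← (nestedCorner_eq_partialSum g n).1, ← (nestedCorner_eq_partialSum g n).2, hside]
  exact (hinv n).2.2.2.2

theorem exists_mem_cantorMT_eq_of_brackets (hf : Continuous (uncurry f))
    (hrefine : CantorRefinable f c) (h0 : Brackets f c 0 0 1) :
    ∃ s ∈ cantorMT, ∃ t ∈ cantorMT, f s t = c := by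
  obtain ⟨a, b, ha, hb, hbr⟩ := exists_digits_brackets hrefine h0
  have hu := tendsto_cantor_partialSum ha
  have hv := tendsto_cantor_partialSum hb
  have hside := tendsto_pow_atTop_nhds_zero_of_lt_one (by norm_num : (0 : ℝ) ≤ 1 / 3) (by norm_num)
  refine ⟨_, ⟨a, fun k => Nat.le_one_iff_eq_zero_or_eq_one.1 (ha k), rfl⟩,
    _, ⟨b, fun k => Nat.le_one_iff_eq_zero_or_eq_one.1 (hb k), rfl⟩, le_antisymm ?_ ?_⟩
  · have hup := (hf.tendsto _).comp ((hu.add hside).prodMk_nhds (hv.add hside))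
    rw [add_zero, add_zero] at hup
    exact le_of_tendsto' hup fun n => (hbr n).1
  · exact ge_of_tendsto' ((hf.tendsto _).comp (hu.prodMk_nhds hv)) fun n => (hbr n).2

end NestedSquares

theorem exists_mem_cantorMT_sq_add_sq_eq_one {x y : ℝ} (hxy : 1 / 81 ≤ x - y)
    (hyx : 1 / 27 ≤ 3 * y - x) (hin : (x - 1 / 81) ^ 2 + (y - 1 / 81) ^ 2 ≤ 1)
    (hout : 1 ≤ x ^ 2 + y ^ 2) :
    ∃ s ∈ cantorMT, ∃ t ∈ cantorMT, (x - s / 81) ^ 2 + (y - t / 81) ^ 2 = 1 := by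
  refine exists_mem_cantorMT_eq_of_brackets (by fun_prop) ?_
    ⟨by simpa using hin, by simpa using hout⟩
  intro u v h hh hu0 hu1 hv0 hv1 hb
  -- each exchange inequality says `h / 81` times an affine expression in `x, y, u, v, h` is
  -- nonnegative, which `hxy` and `hyx` guarantee on the unit square
  exact hb.exists_child (by nlinarith) (by nlinarith) (by nlinarith)

end CantorCircle

open CantorCircle in
theorem stmt_16 :
    (interior ({p : EuclideanSpace ℝ (Fin 2) | p 0 ∈ cantorMT ∧ p 1 ∈ cantorMT} +
      Metric.sphere (0 : EuclideanSpace ℝ (Fin 2)) 1)).Nonempty := by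
  set p₀ : EuclideanSpace ℝ (Fin 2) := !₂[9 / 10, 23 / 50]
  refine ⟨p₀, mem_interior_iff_mem_nhds.2 ?_⟩
  have hxy : ∀ᶠ p in 𝓝 p₀, (1 : ℝ) / 81 < p 0 - p 1 :=
    continuousAt_const.eventually_lt (by fun_prop) (by norm_num [p₀])
  have hyx : ∀ᶠ p in 𝓝 p₀, (1 : ℝ) / 27 < 3 * p 1 - p 0 :=
    continuousAt_const.eventually_lt (by fun_prop) (by norm_num [p₀])
  have hin : ∀ᶠ p in 𝓝 p₀, (p 0 - 1 / 81) ^ 2 + (p 1 - 1 / 81) ^ 2 < 1 :=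
    ContinuousAt.eventually_lt (by fun_prop) continuousAt_const (by norm_num [p₀])
  have hout : ∀ᶠ p in 𝓝 p₀, 1 < p 0 ^ 2 + p 1 ^ 2 :=
    continuousAt_const.eventually_lt (by fun_prop) (by norm_num [p₀])
  filter_upwards [hxy, hyx, hin, hout] with p hxy hyx hin hout
  obtain ⟨s, hs, t, ht, hst⟩ :=
    exists_mem_cantorMT_sq_add_sq_eq_one hxy.le hyx.le hin.le hout.le
  refine ⟨!₂[s / 81, t / 81], ⟨div_81_mem_cantorMT hs, div_81_mem_cantorMT ht⟩,
    p - !₂[s / 81, t / 81], ?_, add_sub_cancel _ _⟩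
  rw [EuclideanSpace.sphere_zero_eq _ zero_le_one]
  simpa [Fin.sum_univ_two] using hst
end

section
/- For every polygon Γ in ℝ² (a finite union of line segments), there exists a set A ⊆ ℝ² of full Lebesgue measure (i.e., ℝ² \ A has measure zero) such that A + Γ has empty interior. -/
open Pointwise

open MeasureTheory Set

/-!
Γ is Lebesgue-null, being a finite union of segments in the plane. Fix a countable dense set D;
then D - Γ is a countable union of translates of the null set -Γ, so its complement A is
conull, and A + Γ misses D, so its interior is empty.
-/

theorem MeasureTheory.Measure.addHaar_segment {E : Type*} [NormedAddCommGroup E] [NormedSpace ℝ E]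
    [MeasurableSpace E] [BorelSpace E] [FiniteDimensional ℝ E] (hE : 1 < Module.finrank ℝ E)
    (μ : Measure E) [μ.IsAddHaarMeasure] (a b : E) : μ (segment ℝ a b) = 0 := by
  have hspan : affineSpan ℝ {a, b} ≠ ⊤ := by
    intro htop
    have hdir := congrArg AffineSubspace.direction htop
    rw [direction_affineSpan, vectorSpan_pair, AffineSubspace.direction_top] at hdir
    have : Module.finrank ℝ (ℝ ∙ (a -ᵥ b)) ≤ 1 := by
      simpa using finrank_span_le_card (R := ℝ) {a -ᵥ b}
    rw [hdir, finrank_top] at this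
    omega
  refine measure_mono_null ?_ (Measure.addHaar_affineSubspace μ _ hspan)
  rw [← convexHull_pair]
  exact convexHull_subset_affineSpan _

theorem exists_null_compl_interior_add_eq_empty {G : Type*} [AddGroup G] [TopologicalSpace G]
    [TopologicalSpace.SeparableSpace G] [MeasurableSpace G] [MeasurableAdd G] [MeasurableNeg G]
    (μ : Measure G) [μ.IsAddLeftInvariant] [μ.IsNegInvariant] {Γ : Set G} (hΓ : μ Γ = 0) :
    ∃ A : Set G, μ Aᶜ = 0 ∧ interior (A + Γ) = ∅ := by
  obtain ⟨D, hDc, hDd⟩ := TopologicalSpace.exists_countable_dense G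
  refine ⟨(D - Γ)ᶜ, ?_, ?_⟩
  · rw [compl_compl, sub_eq_add_neg, ← iUnion_add_left_image, measure_biUnion_null_iff hDc]
    intro d _
    rw [image_add_left, measure_preimage_add, Measure.measure_neg, hΓ]
  · refine eq_empty_of_subset_empty (hDd.interior_compl ▸ interior_mono ?_)
    rintro _ ⟨a, ha, g, hg, rfl⟩ hD
    exact ha ⟨a + g, hD, g, hg, add_sub_cancel_right a g⟩

theorem stmt_17 (n : ℕ) (p q : Fin n → ℝ × ℝ) :
    ∃ A : Set (ℝ × ℝ), volume Aᶜ = 0 ∧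
      interior (A + ⋃ i, segment ℝ (p i) (q i)) = ∅ := by
  have hplane : 1 < Module.finrank ℝ (ℝ × ℝ) := by simp
  refine exists_null_compl_interior_add_eq_empty volume (measure_iUnion_null fun i => ?_)
  exact Measure.addHaar_segment hplane volume (p i) (q i)
end
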